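/- arXiv:2302.07809 — 12 statements merged into one kernel-verified Lean document; each statement's English description precedes it below -/
import Mathlib

section
/- Let V and Q be real Hilbert spaces, let b : V × Q → ℝ be a bounded bilinear form satisfying the inf-sup condition: there exists m > 0 such that for every u ∈ Q, sup over nonzero v ∈ V of b(v,u)/‖v‖ is at least m‖u‖. Let F be a continuous linear functional on V that vanishes on the kernel V₀ = {v ∈ V : b(v,q) = 0 for all q ∈ Q}. Then there exists a unique u ∈ Q such that b(v,u) = F(v) for all v ∈ V, and this solution depends continuously on the data: ‖u‖ ≤ (1/m)‖F‖. -/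
/-!
Through the Riesz map, a closed subspace of the dual of a Hilbert space is the annihilator of its
pre-annihilator. Read `b` as the operator `B : Q → V*`, `B u = b (·, u)`. The inf-sup condition
says `m ‖u‖ ≤ ‖B u‖`, so `B` is injective with closed range, and the pre-annihilator of that range
is the kernel `V₀`. A functional vanishing on `V₀` therefore lies in the range of `B`, and the
lower bound gives `‖u‖ ≤ ‖F‖ / m`.
-/

namespace InnerProductSpace

variable {𝕜 E : Type*} [RCLike 𝕜] [NormedAddCommGroup E] [InnerProductSpace 𝕜 E] [CompleteSpace E]

theorem mem_of_isClosed_of_forall_apply_eq_zero {W : Submodule 𝕜 (StrongDual 𝕜 E)}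
    (hW : IsClosed (W : Set (StrongDual 𝕜 E))) {F : StrongDual 𝕜 E}
    (hF : ∀ v, (∀ φ ∈ W, φ v = 0) → F v = 0) : F ∈ W := by
  set S : Submodule 𝕜 E := W.comap ((toDual 𝕜 E).toLinearEquiv : E →ₗ⋆[𝕜] StrongDual 𝕜 E)
  have : CompleteSpace S := (hW.preimage (toDual 𝕜 E).continuous).completeSpace_coe
  have hf : (toDual 𝕜 E).symm F ∈ Sᗮᗮ := by
    rw [Submodule.mem_orthogonal']
    intro v hv
    rw [toDual_symm_apply]
    refine hF v fun φ hφ => ?_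
    rw [← toDual_symm_apply]
    exact (Submodule.mem_orthogonal S v).1 hv _ (by simpa [S] using hφ)
  rw [Submodule.orthogonal_orthogonal] at hf
  simpa [S] using hf

end InnerProductSpace

namespace ContinuousLinearMap

theorem iSup_div_norm_le_opNorm {E : Type*} [NormedAddCommGroup E] [NormedSpace ℝ E]
    (φ : StrongDual ℝ E) :
    ⨆ v : {v : E // v ≠ 0}, φ v.1 / ‖v.1‖ ≤ ‖φ‖ :=
  Real.iSup_le (fun v => (div_le_div_of_nonneg_right (le_abs_self _) (norm_nonneg _)).trans
    (φ.ratio_le_opNorm v.1)) (norm_nonneg φ)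

variable {𝕜 E G : Type*} [RCLike 𝕜] [NormedAddCommGroup E] [NormedSpace 𝕜 E]
  [NormedAddCommGroup G] [NormedSpace 𝕜 G]

theorem antilipschitzWith_of_mul_norm_le (B : E →L[𝕜] G) {m : ℝ} (hm : 0 < m)
    (hB : ∀ u, m * ‖u‖ ≤ ‖B u‖) : AntilipschitzWith (Real.toNNReal m⁻¹) B :=
  B.antilipschitz_of_bound fun u => by
    rw [Real.coe_toNNReal _ (inv_nonneg.2 hm.le), inv_mul_eq_div, le_div_iff₀' hm]
    exact hB u

variable {V : Type*} [NormedAddCommGroup V] [InnerProductSpace 𝕜 V] [CompleteSpace V]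
  [CompleteSpace E]

theorem existsUnique_apply_eq_of_mul_norm_le (B : E →L[𝕜] StrongDual 𝕜 V) {m : ℝ} (hm : 0 < m)
    (hB : ∀ u, m * ‖u‖ ≤ ‖B u‖) {F : StrongDual 𝕜 V} (hF : ∀ v, (∀ u, B u v = 0) → F v = 0) :
    ∃! u, B u = F := by
  have hanti := B.antilipschitzWith_of_mul_norm_le hm hB
  have hclosed : IsClosed (B.range : Set (StrongDual 𝕜 V)) := by
    rw [LinearMap.coe_range]
    exact hanti.isClosed_range B.uniformContinuous
  obtain ⟨u, hu⟩ : F ∈ B.range :=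
    InnerProductSpace.mem_of_isClosed_of_forall_apply_eq_zero hclosed fun v hv =>
      hF v fun u => hv _ ⟨u, rfl⟩
  exact ⟨u, hu, fun w hw => hanti.injective (hw.trans hu.symm)⟩

end ContinuousLinearMap

/-- Well-posedness of the mixed variational problem. Given real Hilbert
spaces `V`, `Q`, a bounded bilinear form `b` satisfying the inf-sup condition with
constant `m > 0`, and a continuous linear functional `F` vanishing on the kernel
`V₀ = {v : ∀ q, b v q = 0}`, there is a unique `u ∈ Q` with `b v u = F v` for all `v`,
and the solution satisfies `‖u‖ ≤ (1/m) ‖F‖`. -/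
theorem statement0
    {V Q : Type*}
    [NormedAddCommGroup V] [InnerProductSpace ℝ V] [CompleteSpace V]
    [NormedAddCommGroup Q] [InnerProductSpace ℝ Q] [CompleteSpace Q]
    (b : V →ₗ[ℝ] Q →ₗ[ℝ] ℝ)
    (hbdd : ∃ M : ℝ, ∀ (v : V) (u : Q), |b v u| ≤ M * ‖v‖ * ‖u‖)
    (m : ℝ) (hm : 0 < m)
    (hinfsup : ∀ u : Q, m * ‖u‖ ≤ ⨆ v : {v : V // v ≠ 0}, b v.1 u / ‖v.1‖)
    (F : V →L[ℝ] ℝ)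
    (hF : ∀ v : V, (∀ q : Q, b v q = 0) → F v = 0) :
    (∃! u : Q, ∀ v : V, b v u = F v) ∧
      ∀ u : Q, (∀ v : V, b v u = F v) → ‖u‖ ≤ (1 / m) * ‖F‖ := by
  set B : Q →L[ℝ] StrongDual ℝ V := (b.mkContinuousOfExistsBound₂ hbdd).flip
  have hB : ∀ u, m * ‖u‖ ≤ ‖B u‖ := fun u =>
    (hinfsup u).trans (ContinuousLinearMap.iSup_div_norm_le_opNorm (B u))
  have hsol : ∀ u, (∀ v, b v u = F v) ↔ B u = F := fun u =>
    (ContinuousLinearMap.ext_iff (f := B u) (g := F)).symm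
  refine ⟨?_, fun u hu => ?_⟩
  · simp only [hsol]
    exact B.existsUnique_apply_eq_of_mul_norm_le hm hB hF
  · rw [one_div, inv_mul_eq_div, le_div_iff₀' hm, ← (hsol u).1 hu]
    exact hB u
end

section
/- Let V and Q be real Hilbert spaces, b : V × Q → ℝ a bounded bilinear form, and let V_h ⊆ V and M_h ⊆ Q be finite-dimensional subspaces satisfying the discrete inf-sup condition: there exists m_h > 0 such that for every p_h ∈ M_h, sup over nonzero v_h ∈ V_h of b(v_h,p_h)/‖v_h‖ is at least m_h‖p_h‖. Then for every continuous linear functional F on V, there exists a unique pair (w_h, u_h) ∈ V_h × M_h satisfying ⟨w_h, v_h⟩_V + b(v_h, u_h) = F(v_h) for all v_h ∈ V_h and b(w_h, q_h) = 0 for all q_h ∈ M_h. -/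
open scoped RealInnerProductSpace

/-! In finite dimensions the discrete saddle point operator `(w, u) ↦ (⟪w, ·⟫ + b(·, u), b(w, ·))`
maps `V_h × M_h` to a space of the same dimension, `V_h* × M_h*`, so it suffices to show that it is
injective. If `(w, u)` solves the homogeneous system, testing the first equation with `v = w` and
using the second gives `‖w‖² = 0`; then `b(·, u)` vanishes on `V_h`, and the inf-sup condition
forces `u = 0`. -/

namespace SaddlePoint

variable {K X Y : Type*} [Field K] [AddCommGroup X] [Module K X] [AddCommGroup Y] [Module K Y]

def saddlePointMap (a : X →ₗ[K] X →ₗ[K] K) (b : X →ₗ[K] Y →ₗ[K] K) :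
    X × Y →ₗ[K] Module.Dual K X × Module.Dual K Y :=
  (a.coprod b.flip).prod (b ∘ₗ LinearMap.fst K X Y)

theorem saddlePointMap_apply (a : X →ₗ[K] X →ₗ[K] K) (b : X →ₗ[K] Y →ₗ[K] K) (wu : X × Y) :
    saddlePointMap a b wu = (a wu.1 + b.flip wu.2, b wu.1) :=
  rfl

theorem saddlePointMap_injective {a : X →ₗ[K] X →ₗ[K] K} {b : X →ₗ[K] Y →ₗ[K] K}
    (ha : ∀ x, a x x = 0 → x = 0) (hb : ∀ y, (∀ x, b x y = 0) → y = 0) :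
    Function.Injective (saddlePointMap a b) := by
  rw [← LinearMap.ker_eq_bot, LinearMap.ker_eq_bot']
  rintro ⟨w, u⟩ h
  simp only [saddlePointMap_apply, Prod.mk_eq_zero] at h
  obtain ⟨hfst, hsnd⟩ := h
  have hw : w = 0 := ha w <| by
    simpa [LinearMap.ext_iff.mp hsnd u] using LinearMap.ext_iff.mp hfst w
  subst hw
  have hu : u = 0 := hb u fun x => by simpa using LinearMap.ext_iff.mp hfst x
  simp [hu]

theorem saddlePointMap_bijective [FiniteDimensional K X] [FiniteDimensional K Y]
    {a : X →ₗ[K] X →ₗ[K] K} {b : X →ₗ[K] Y →ₗ[K] K}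
    (ha : ∀ x, a x x = 0 → x = 0) (hb : ∀ y, (∀ x, b x y = 0) → y = 0) :
    Function.Bijective (saddlePointMap a b) := by
  have hinj := saddlePointMap_injective ha hb
  refine ⟨hinj, (LinearMap.injective_iff_surjective_of_finrank_eq_finrank ?_).mp hinj⟩
  simp only [Module.finrank_prod, Subspace.dual_finrank_eq]

end SaddlePoint

open SaddlePoint

theorem eq_zero_of_infSup {V Q : Type*} [NormedAddCommGroup V] [NormedAddCommGroup Q]
    [Module ℝ V] [Module ℝ Q] (b : V →ₗ[ℝ] Q →ₗ[ℝ] ℝ) {Vh : Submodule ℝ V} {mh : ℝ} (hmh : 0 < mh) {p : Q}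
    (hinfsup : mh * ‖p‖ ≤ ⨆ v : {v : Vh // v ≠ 0}, b (v.1 : V) p / ‖(v.1 : V)‖)
    (hp : ∀ v : Vh, b (v : V) p = 0) :
    p = 0 := by
  simp only [hp, zero_div, Real.iSup_const_zero] at hinfsup
  exact norm_le_zero_iff.mp (nonpos_of_mul_nonpos_right hinfsup hmh)

theorem statement2_general
    {V Q : Type*}
    [NormedAddCommGroup V] [InnerProductSpace ℝ V]
    [NormedAddCommGroup Q] [InnerProductSpace ℝ Q]
    (b : V →ₗ[ℝ] Q →ₗ[ℝ] ℝ)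
    (Vh : Submodule ℝ V) (Mh : Submodule ℝ Q)
    [FiniteDimensional ℝ Vh] [FiniteDimensional ℝ Mh]
    (mh : ℝ) (hmh : 0 < mh)
    (hinfsup : ∀ p : Mh,
      mh * ‖(p : Q)‖ ≤ ⨆ v : {v : Vh // v ≠ 0}, b (v.1 : V) (p : Q) / ‖(v.1 : V)‖)
    (F : V →L[ℝ] ℝ) :
    ∃! wu : Vh × Mh,
      (∀ v : Vh, ⟪(wu.1 : V), (v : V)⟫ + b (v : V) (wu.2 : Q) = F (v : V)) ∧
      (∀ q : Mh, b (wu.1 : V) (q : Q) = 0) := by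
  set a := (innerₗ V).compl₁₂ Vh.subtype Vh.subtype
  set bh := b.compl₁₂ Vh.subtype Mh.subtype
  have ha : ∀ w, a w w = 0 → w = 0 := fun w hw =>
    Subtype.ext (inner_self_eq_zero.mp hw)
  have hb : ∀ u, (∀ v, bh v u = 0) → u = 0 := fun u hu =>
    Subtype.ext (eq_zero_of_infSup b hmh (hinfsup u) hu)
  refine existsUnique_congr (fun wu => ?_) |>.mp
    ((saddlePointMap_bijective ha hb).existsUnique ((F : V →ₗ[ℝ] ℝ) ∘ₗ Vh.subtype, 0))
  simp only [saddlePointMap_apply, Prod.mk.injEq, LinearMap.ext_iff]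
  rfl

/-- If the finite-dimensional subspaces `V_h ⊆ V` and `M_h ⊆ Q` satisfy the
discrete inf-sup condition with constant `m_h > 0`, then for every continuous linear
functional `F` on `V` the discrete saddle point system
`⟪w_h, v_h⟫ + b(v_h, u_h) = F(v_h)` for all `v_h ∈ V_h`, `b(w_h, q_h) = 0` for all
`q_h ∈ M_h`, has a unique solution `(w_h, u_h) ∈ V_h × M_h`. -/
theorem statement2
    {V Q : Type*}
    [NormedAddCommGroup V] [InnerProductSpace ℝ V] [CompleteSpace V]
    [NormedAddCommGroup Q] [InnerProductSpace ℝ Q] [CompleteSpace Q]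
    (b : V →ₗ[ℝ] Q →ₗ[ℝ] ℝ)
    (hbdd : ∃ M : ℝ, ∀ (v : V) (u : Q), |b v u| ≤ M * ‖v‖ * ‖u‖)
    (Vh : Submodule ℝ V) (Mh : Submodule ℝ Q)
    [FiniteDimensional ℝ Vh] [FiniteDimensional ℝ Mh]
    (mh : ℝ) (hmh : 0 < mh)
    (hinfsup : ∀ p : Mh,
      mh * ‖(p : Q)‖ ≤ ⨆ v : {v : Vh // v ≠ 0}, b (v.1 : V) (p : Q) / ‖(v.1 : V)‖)
    (F : V →L[ℝ] ℝ) :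
    ∃! wu : Vh × Mh,
      (∀ v : Vh, ⟪(wu.1 : V), (v : V)⟫ + b (v : V) (wu.2 : Q) = F (v : V)) ∧
      (∀ q : Mh, b (wu.1 : V) (q : Q) = 0) :=
  statement2_general b Vh Mh mh hmh hinfsup F
end

section
/- For every ε > 0 and every x ∈ [0,1], the function s ↦ G(x,s) is nonnegative on [0,1], is monotonically increasing on [0,x] and monotonically decreasing on [x,1]; consequently 0 ≤ G(x,s) ≤ G(x,x) for all s, x ∈ [0,1]. -/
/-! On `s < x` and on `x ≤ s` the Green's function is a nonnegative multiple of
`1 - e^{-s/ε}` (increasing, vanishing at `s = 0`) resp. of `e^{(1-s)/ε} - 1` (decreasing,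
vanishing at `s = 1`). Both branches agree at `s = x`, so `G(x, ·)` rises from `0` to `G(x,x)`
and falls back to `0`. -/

/-- The Green's function of `−ε u'' + u' = f` on `(0,1)` with homogeneous Dirichlet
boundary conditions: `G(x,s) = (e^{1/ε} − e^{x/ε})(1 − e^{−s/ε})/(e^{1/ε} − 1)` for
`s < x`, and `G(x,s) = (e^{x/ε} − 1)(e^{(1−s)/ε} − 1)/(e^{1/ε} − 1)` for `x ≤ s`. -/
noncomputable def greenG (ε x s : ℝ) : ℝ :=
  if s < x then
    (Real.exp (1 / ε) - Real.exp (x / ε)) * (1 - Real.exp (-s / ε)) /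
      (Real.exp (1 / ε) - 1)
  else
    (Real.exp (x / ε) - 1) * (Real.exp ((1 - s) / ε) - 1) / (Real.exp (1 / ε) - 1)

namespace greenG

open Real

noncomputable def left (ε x s : ℝ) : ℝ :=
  (exp (1 / ε) - exp (x / ε)) * (1 - exp (-s / ε)) / (exp (1 / ε) - 1)

noncomputable def right (ε x s : ℝ) : ℝ :=
  (exp (x / ε) - 1) * (exp ((1 - s) / ε) - 1) / (exp (1 / ε) - 1)

variable {ε x s : ℝ}

theorem left_self_eq_right_self (ε x : ℝ) : left ε x x = right ε x x := by
  have hsplit : exp (1 / ε) = exp (x / ε) * exp ((1 - x) / ε) := by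
    rw [← exp_add]; ring_nf
  have hinv : exp (x / ε) * exp (-x / ε) = 1 := by
    rw [← exp_add, show x / ε + -x / ε = 0 by ring, exp_zero]
  have hshift : exp (1 / ε) * exp (-x / ε) = exp ((1 - x) / ε) := by
    rw [← exp_add]; ring_nf
  unfold left right
  congr 1
  linear_combination hsplit - hshift + hinv

theorem left_zero (ε x : ℝ) : left ε x 0 = 0 := by
  simp [left]

theorem right_one (ε x : ℝ) : right ε x 1 = 0 := by
  simp [right]

theorem eq_left_of_le (h : s ≤ x) : greenG ε x s = left ε x s := by
  rcases h.lt_or_eq with h | rfl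
  · exact if_pos h
  · rw [greenG, if_neg (lt_irrefl s), left_self_eq_right_self]; rfl

theorem eq_right_of_le (h : x ≤ s) : greenG ε x s = right ε x s :=
  if_neg h.not_gt

theorem exp_one_div_sub_one_pos (hε : 0 < ε) : 0 < exp (1 / ε) - 1 :=
  sub_pos.mpr (one_lt_exp_iff.mpr (by positivity))

theorem monotone_left (hε : 0 < ε) (hx : x ≤ 1) : Monotone (left ε x) := by
  intro a b hab
  have hc : 0 ≤ exp (1 / ε) - exp (x / ε) := sub_nonneg.mpr (by gcongr)
  have hD := exp_one_div_sub_one_pos hε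
  unfold left
  gcongr

theorem antitone_right (hε : 0 < ε) (hx : 0 ≤ x) : Antitone (right ε x) := by
  intro a b hab
  have hc : 0 ≤ exp (x / ε) - 1 := sub_nonneg.mpr (one_le_exp (by positivity))
  have hD := exp_one_div_sub_one_pos hε
  unfold right
  gcongr

end greenG

/-- For every `ε > 0` and `x ∈ [0,1]`, the function `s ↦ G(x,s)` is
nonnegative on `[0,1]`, increasing on `[0,x]`, decreasing on `[x,1]`, and consequently
`0 ≤ G(x,s) ≤ G(x,x)` for all `s ∈ [0,1]`. -/
theorem statement5 (ε : ℝ) (hε : 0 < ε) (x : ℝ) (hx : x ∈ Set.Icc (0 : ℝ) 1) :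
    (∀ s ∈ Set.Icc (0 : ℝ) 1, 0 ≤ greenG ε x s) ∧
    MonotoneOn (fun s => greenG ε x s) (Set.Icc 0 x) ∧
    AntitoneOn (fun s => greenG ε x s) (Set.Icc x 1) ∧
    (∀ s ∈ Set.Icc (0 : ℝ) 1, greenG ε x s ≤ greenG ε x x) := by
  have hL := greenG.monotone_left hε hx.2
  have hR := greenG.antitone_right hε hx.1
  refine ⟨fun s hs => ?_, ?_, ?_, fun s _ => ?_⟩
  · rcases le_total s x with h | h
    · rw [greenG.eq_left_of_le h, ← greenG.left_zero ε x]; exact hL hs.1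
    · rw [greenG.eq_right_of_le h, ← greenG.right_one ε x]; exact hR hs.2
  · exact (hL.monotoneOn _).congr fun s hs => (greenG.eq_left_of_le hs.2).symm
  · exact (hR.antitoneOn _).congr fun s hs => (greenG.eq_right_of_le hs.1).symm
  · rcases le_total s x with h | h
    · rw [greenG.eq_left_of_le h, greenG.eq_left_of_le le_rfl]; exact hL h
    · rw [greenG.eq_right_of_le h, greenG.eq_right_of_le le_rfl]; exact hR h
end

section
/- For every ε > 0 and every x ∈ [0,1], the diagonal value of the Green's function satisfies G(x,x) = (e^{1/ε} − e^{x/ε})(1 − e^{−x/ε})/(e^{1/ε} − 1) ≤ G_∞ := (e^{1/(2ε)} − 1)/(e^{1/(2ε)} + 1), and G_∞ < 1. -/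
/-! Writing `a = e^{x/ε}` and `b = e^{(1-x)/ε}`, the diagonal value is
`G(x,x) = (a - 1)(b - 1)/(ab - 1)` with `ab = e^{1/ε} = m²` for `m = e^{1/(2ε)} > 1`.
By AM-GM `a + b ≥ 2m`, so `(a - 1)(b - 1) = m² + 1 - (a + b) ≤ (m - 1)²`, and dividing by
`m² - 1` gives `G(x,x) ≤ (m - 1)/(m + 1)`. -/

theorem two_mul_le_add_of_mul_eq_sq {a b m : ℝ} (ha : 0 ≤ a) (hb : 0 ≤ b)
    (h : a * b = m ^ 2) : 2 * m ≤ a + b := by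
  nlinarith [sq_nonneg (a - b)]

theorem sub_one_mul_sub_one_div_le {a b m : ℝ} (ha : 0 ≤ a) (hb : 0 ≤ b) (hm : 1 < m)
    (h : a * b = m ^ 2) : (a - 1) * (b - 1) / (m ^ 2 - 1) ≤ (m - 1) / (m + 1) := by
  have hm2 : 0 < m ^ 2 - 1 := by nlinarith
  have hsum := two_mul_le_add_of_mul_eq_sq ha hb h
  calc (a - 1) * (b - 1) / (m ^ 2 - 1) ≤ (m - 1) ^ 2 / (m ^ 2 - 1) := by
        gcongr
        nlinarith
    _ = (m - 1) / (m + 1) := by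
        field_simp [hm2.ne', show m + 1 ≠ 0 by linarith]
        ring

theorem Real.exp_div_mul_exp_one_sub_div (ε x : ℝ) :
    Real.exp (x / ε) * Real.exp ((1 - x) / ε) = Real.exp (1 / ε) := by
  rw [← Real.exp_add, ← add_div, add_sub_cancel]

theorem Real.exp_one_div_two_mul_sq (ε : ℝ) :
    Real.exp (1 / (2 * ε)) ^ 2 = Real.exp (1 / ε) := by
  rw [← Real.exp_nat_mul]
  congr 1
  push_cast
  field_simp

theorem greenG_self (ε x : ℝ) :
    greenG ε x x =
      (Real.exp (x / ε) - 1) * (Real.exp ((1 - x) / ε) - 1) / (Real.exp (1 / ε) - 1) :=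
  if_neg (lt_irrefl x)

theorem greenG_self_eq' (ε x : ℝ) :
    greenG ε x x =
      (Real.exp (1 / ε) - Real.exp (x / ε)) * (1 - Real.exp (-x / ε)) /
        (Real.exp (1 / ε) - 1) := by
  rw [greenG_self, ← Real.exp_div_mul_exp_one_sub_div ε x, neg_div, Real.exp_neg]
  congr 1
  field_simp [(Real.exp_pos (x / ε)).ne']

theorem statement6_general (ε : ℝ) (hε : 0 < ε) (x : ℝ) :
    greenG ε x x =
      (Real.exp (1 / ε) - Real.exp (x / ε)) * (1 - Real.exp (-x / ε)) /
        (Real.exp (1 / ε) - 1) ∧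
    greenG ε x x ≤ (Real.exp (1 / (2 * ε)) - 1) / (Real.exp (1 / (2 * ε)) + 1) ∧
    (Real.exp (1 / (2 * ε)) - 1) / (Real.exp (1 / (2 * ε)) + 1) < 1 := by
  have hm : 1 < Real.exp (1 / (2 * ε)) := Real.one_lt_exp_iff.2 (by positivity)
  refine ⟨greenG_self_eq' ε x, ?_, (div_lt_one (by positivity)).2 (by linarith)⟩
  rw [greenG_self, ← Real.exp_one_div_two_mul_sq]
  refine sub_one_mul_sub_one_div_le (Real.exp_pos _).le (Real.exp_pos _).le hm ?_
  rw [Real.exp_div_mul_exp_one_sub_div, Real.exp_one_div_two_mul_sq]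

/-- For every `ε > 0` and `x ∈ [0,1]`,
`G(x,x) = (e^{1/ε} − e^{x/ε})(1 − e^{−x/ε})/(e^{1/ε} − 1) ≤ G_∞ := (e^{1/(2ε)} − 1)/(e^{1/(2ε)} + 1)`,
and `G_∞ < 1`. -/
theorem statement6 (ε : ℝ) (hε : 0 < ε) (x : ℝ) (hx : x ∈ Set.Icc (0 : ℝ) 1) :
    greenG ε x x =
      (Real.exp (1 / ε) - Real.exp (x / ε)) * (1 - Real.exp (-x / ε)) /
        (Real.exp (1 / ε) - 1) ∧
    greenG ε x x ≤ (Real.exp (1 / (2 * ε)) - 1) / (Real.exp (1 / (2 * ε)) + 1) ∧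
    (Real.exp (1 / (2 * ε)) - 1) / (Real.exp (1 / (2 * ε)) + 1) < 1 :=
  statement6_general ε hε x
end

section
/- For every ε > 0 and every x ∈ [0,1], ∫₀¹ G(x,s) ds = x − (e^{x/ε} − 1)/(e^{1/ε} − 1). -/
/-!
On each side of `s = x` the function `s ↦ G(x,s)` has the form `c * (1 - k e^{-s/ε})`,
with antiderivative `c * (s + k ε e^{-s/ε})`; since `G(x,·)` is continuous at `s = x`,
the left formula also holds at `s = x`, so the integral over `[0,1]` splits at `x` into
two closed-form pieces whose `ε`-terms cancel.
-/

open Real Set intervalIntegral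

variable {ε : ℝ}

theorem hasDerivAt_add_mul_exp_neg_div (hε : ε ≠ 0) (k s : ℝ) :
    HasDerivAt (fun t => t + k * ε * exp (-t / ε)) (1 - k * exp (-s / ε)) s := by
  have hlin : HasDerivAt (fun t : ℝ => -t / ε) (-1 / ε) s := (hasDerivAt_neg s).div_const ε
  refine ((hasDerivAt_id' s).add (hlin.exp.const_mul (k * ε))).congr_deriv ?_
  field_simp
  ring

theorem integral_one_sub_mul_exp_neg_div (hε : ε ≠ 0) (k a b : ℝ) :
    ∫ s in a..b, (1 - k * exp (-s / ε)) =
      b - a + k * ε * (exp (-b / ε) - exp (-a / ε)) := by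
  rw [integral_eq_sub_of_hasDerivAt (fun s _ => hasDerivAt_add_mul_exp_neg_div hε k s)
    ((by fun_prop : Continuous fun s => 1 - k * exp (-s / ε)).intervalIntegrable a b)]
  ring

theorem greenG_eqOn_Iic (x : ℝ) :
    EqOn (greenG ε x)
      (fun s => (exp (1 / ε) - exp (x / ε)) / (exp (1 / ε) - 1) * (1 - 1 * exp (-s / ε)))
      (Iic x) := by
  intro s hs
  rcases (mem_Iic.mp hs).lt_or_eq with hlt | rfl
  · simp only [greenG, if_pos hlt, one_mul, div_mul_eq_mul_div]
  · simp only [greenG, lt_irrefl, if_false, sub_div, neg_div, exp_sub, exp_neg]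
    field_simp

theorem greenG_eqOn_Ici (x : ℝ) :
    EqOn (greenG ε x)
      (fun s => -((exp (x / ε) - 1) / (exp (1 / ε) - 1)) * (1 - exp (1 / ε) * exp (-s / ε)))
      (Ici x) := by
  intro s hs
  simp only [greenG, if_neg (not_lt.mpr (mem_Ici.mp hs)), sub_div, neg_div, exp_sub, exp_neg]
  ring

/-- For every `ε > 0` and `x ∈ [0,1]`,
`∫₀¹ G(x,s) ds = x − (e^{x/ε} − 1)/(e^{1/ε} − 1)`. -/
theorem statement7 (ε : ℝ) (hε : 0 < ε) (x : ℝ) (hx : x ∈ Set.Icc (0 : ℝ) 1) :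
    (∫ s in (0 : ℝ)..1, greenG ε x s) =
      x - (Real.exp (x / ε) - 1) / (Real.exp (1 / ε) - 1) := by
  obtain ⟨hx0, hx1⟩ := hx
  have hleft : EqOn (greenG ε x) _ (uIcc 0 x) :=
    (greenG_eqOn_Iic x).mono ((uIcc_of_le hx0).trans_subset Icc_subset_Iic_self)
  have hright : EqOn (greenG ε x) _ (uIcc x 1) :=
    (greenG_eqOn_Ici x).mono ((uIcc_of_le hx1).trans_subset Icc_subset_Ici_self)
  have hE : exp (1 / ε) - 1 ≠ 0 := sub_ne_zero.mpr ((exp_eq_one_iff _).not.mpr (by positivity))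
  rw [← integral_add_adjacent_intervals
      ((by fun_prop : Continuous _).continuousOn.congr hleft).intervalIntegrable
      ((by fun_prop : Continuous _).continuousOn.congr hright).intervalIntegrable,
    integral_congr hleft, integral_congr hright, integral_const_mul, integral_const_mul,
    integral_one_sub_mul_exp_neg_div hε.ne', integral_one_sub_mul_exp_neg_div hε.ne']
  simp only [zero_div, neg_div, neg_zero, exp_neg, exp_zero]
  field_simp
  ring
end

section
/- Let ε > 0 and let f : [0,1] → ℝ be continuous with ∫₀¹ f(s) ds = 0. If u is continuously differentiable on [0,1], twice differentiable on (0,1), satisfies −ε u''(x) + u'(x) = f(x) for all x ∈ (0,1) and u(0) = u(1) = 0, then |u'(x)| ≤ ‖f‖_∞ for all x ∈ [0,1], where ‖f‖_∞ = sup_{s∈[0,1]} |f(s)|. -/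
/-!
Let `M` bound `|f|` on `[0,1]`. Integrating the equation, `ε u' - u` has derivative `-f`, which
has zero integral, so `u'(0) = u'(1)`. Where `u' > M ≥ f` the equation gives `u'' > 0`, so `u'`
is strictly increasing there; hence a point where `u'` attains its maximum, taken to lie in
`[0,1)` thanks to `u'(0) = u'(1)`, cannot carry a value above `M`. Applying this to `-u` gives
the lower bound.
-/

open Set Topology intervalIntegral

lemma abs_le_iSup_abs_of_continuousOn {α : Type*} [TopologicalSpace α] {s : Set α} {f : α → ℝ}
    (hs : IsCompact s) (hf : ContinuousOn f s) {x : α} (hx : x ∈ s) :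
    |f x| ≤ ⨆ t : s, |f t| := by
  have hbdd : BddAbove (range fun t : s => |f t|) := by
    simpa only [image_eq_range] using hs.bddAbove_image hf.abs
  exact le_ciSup hbdd ⟨x, hx⟩

lemma IsMaxOn.le_of_hasDerivAt_pos_of_gt {v v' : ℝ → ℝ} {a b y M : ℝ}
    (hv : ContinuousOn v (Icc a b)) (hv' : ∀ x ∈ Ioo a b, HasDerivAt v (v' x) x)
    (hpos : ∀ x ∈ Ioo a b, M < v x → 0 < v' x) (hy : y ∈ Ico a b)
    (hmax : IsMaxOn v (Icc a b) y) : v y ≤ M := by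
  by_contra! hMy
  have hnhds : {x | M < v x} ∩ Icc a b ∈ 𝓝[≥] y := by
    have hIcc : Icc a b ∈ 𝓝[≥] y := Icc_mem_nhdsGE_of_mem hy
    refine Filter.inter_mem ?_ hIcc
    exact (hv.continuousWithinAt (Ico_subset_Icc_self hy)).mono_of_mem_nhdsWithin hIcc
      |>.eventually (lt_mem_nhds hMy)
  obtain ⟨z, hyz, hsub⟩ := mem_nhdsGE_iff_exists_Icc_subset.mp hnhds
  have hz : z ∈ Icc a b := (hsub (right_mem_Icc.mpr hyz.le)).2
  have hinterior : ∀ x ∈ interior (Icc y z), x ∈ Ioo a b ∧ M < v x := by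
    rw [interior_Icc]
    exact fun x hx => ⟨⟨hy.1.trans_lt hx.1, hx.2.trans_le hz.2⟩,
      (hsub (Ioo_subset_Icc_self hx)).1⟩
  have hmono : StrictMonoOn v (Icc y z) :=
    strictMonoOn_of_hasDerivWithinAt_pos (convex_Icc y z) (hv.mono fun x hx => (hsub hx).2)
      (fun x hx => (hv' x (hinterior x hx).1).hasDerivWithinAt)
      (fun x hx => hpos x (hinterior x hx).1 (hinterior x hx).2)
  have hlt : v y < v z := hmono (left_mem_Icc.mpr hyz.le) (right_mem_Icc.mpr hyz.le) hyz
  exact (hmax hz).not_gt hlt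

namespace ConvectionDiffusion

variable {ε a b : ℝ} {f u u' u'' : ℝ → ℝ}

/-- `ε u' - u` is an antiderivative of `-f`. -/
lemma deriv_left_eq_deriv_right (hε : ε ≠ 0) (hab : a ≤ b)
    (hf : ContinuousOn f (Icc a b)) (hf0 : ∫ s in a..b, f s = 0)
    (hu' : ∀ x ∈ Icc a b, HasDerivWithinAt u (u' x) (Icc a b) x)
    (hu'c : ContinuousOn u' (Icc a b)) (hu'' : ∀ x ∈ Ioo a b, HasDerivAt u' (u'' x) x)
    (hode : ∀ x ∈ Ioo a b, -ε * u'' x + u' x = f x) (hu : u a = u b) :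
    u' a = u' b := by
  have hcont : ContinuousOn (fun x => ε * u' x - u x) (Icc a b) :=
    (hu'c.const_smul ε).sub fun x hx => (hu' x hx).continuousWithinAt
  have hderiv : ∀ x ∈ Ioo a b, HasDerivAt (fun x => ε * u' x - u x) (-f x) x := by
    intro x hx
    have hux : HasDerivAt u (u' x) x := (hu' x (Ioo_subset_Icc_self hx)).hasDerivAt
      (Icc_mem_nhds hx.1 hx.2)
    exact (((hu'' x hx).const_mul ε).sub hux).congr_deriv (by linear_combination -hode x hx)
  have hint : IntervalIntegrable (fun x => -f x) MeasureTheory.volume a b :=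
    (hf.neg.mono (uIcc_of_le hab).subset) |>.intervalIntegrable
  have hftc := integral_eq_sub_of_hasDerivAt_of_le hab hcont hderiv hint
  rw [integral_neg, hf0, neg_zero, hu] at hftc
  exact mul_left_cancel₀ hε (by linarith)

lemma deriv_le_of_forcing_le (hε : 0 < ε) (hab : a < b) {M : ℝ} (hM : ∀ x ∈ Ioo a b, f x ≤ M)
    (hu'c : ContinuousOn u' (Icc a b)) (hu'' : ∀ x ∈ Ioo a b, HasDerivAt u' (u'' x) x)
    (hode : ∀ x ∈ Ioo a b, -ε * u'' x + u' x = f x) (hends : u' a = u' b) :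
    ∀ x ∈ Icc a b, u' x ≤ M := by
  have hpos : ∀ x ∈ Ioo a b, M < u' x → 0 < u'' x := by
    intro x hx hMx
    nlinarith [hode x hx, hM x hx]
  obtain ⟨y, hy, hmax⟩ := isCompact_Icc.exists_isMaxOn (nonempty_Icc.mpr hab.le) hu'c
  have hmax' : ∃ y ∈ Ico a b, IsMaxOn u' (Icc a b) y := by
    rcases hy.2.lt_or_eq with hyb | rfl
    · exact ⟨y, ⟨hy.1, hyb⟩, hmax⟩
    · exact ⟨a, left_mem_Ico.mpr hab, fun x hx => hends ▸ hmax hx⟩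
  obtain ⟨y, hy, hmax⟩ := hmax'
  exact fun x hx => (hmax hx).trans (hmax.le_of_hasDerivAt_pos_of_gt hu'c hu'' hpos hy)

end ConvectionDiffusion

open ConvectionDiffusion

/-- If `f` is continuous on `[0,1]` with zero average and `u` is a `C¹`
function on `[0,1]`, twice differentiable on `(0,1)`, solving `−ε u'' + u' = f` on
`(0,1)` with `u(0) = u(1) = 0`, then `|u'(x)| ≤ ‖f‖_∞` for all `x ∈ [0,1]`. -/
theorem statement11 (ε : ℝ) (hε : 0 < ε) (f : ℝ → ℝ)
    (hf : ContinuousOn f (Set.Icc 0 1))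
    (hf0 : (∫ s in (0 : ℝ)..1, f s) = 0)
    (u u' u'' : ℝ → ℝ)
    (hu' : ∀ x ∈ Set.Icc (0 : ℝ) 1, HasDerivWithinAt u (u' x) (Set.Icc 0 1) x)
    (hu'c : ContinuousOn u' (Set.Icc 0 1))
    (hu'' : ∀ x ∈ Set.Ioo (0 : ℝ) 1, HasDerivAt u' (u'' x) x)
    (hode : ∀ x ∈ Set.Ioo (0 : ℝ) 1, -ε * u'' x + u' x = f x)
    (hu0 : u 0 = 0) (hu1 : u 1 = 0) :
    ∀ x ∈ Set.Icc (0 : ℝ) 1, |u' x| ≤ ⨆ s : Set.Icc (0 : ℝ) 1, |f (s : ℝ)| := by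
  set M := ⨆ s : Set.Icc (0 : ℝ) 1, |f (s : ℝ)|
  have hM : ∀ x ∈ Ioo (0 : ℝ) 1, |f x| ≤ M := fun x hx =>
    abs_le_iSup_abs_of_continuousOn isCompact_Icc hf (Ioo_subset_Icc_self hx)
  have hends : u' 0 = u' 1 := deriv_left_eq_deriv_right hε.ne' zero_le_one hf hf0 hu'
    hu'c hu'' hode (hu0.trans hu1.symm)
  have hupper := deriv_le_of_forcing_le hε zero_lt_one (fun x hx => (abs_le.mp (hM x hx)).2)
    hu'c hu'' hode hends
  have hlower := deriv_le_of_forcing_le (f := fun x => -f x) (u'' := fun x => -u'' x) hε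
    zero_lt_one (fun x hx => neg_le.mp (abs_le.mp (hM x hx)).1) hu'c.neg
    (fun x hx => (hu'' x hx).neg)
    (fun x hx => by simp only [Pi.neg_apply]; linear_combination -hode x hx) (neg_inj.mpr hends)
  exact fun x hx => abs_le.mpr ⟨neg_le.mp (hlower x hx), hupper x hx⟩
end

section
/- Let ε > 0 and let f : [0,1] → ℝ be continuous with ∫₀¹ f(s) ds = 0. If u is continuously differentiable on [0,1], twice differentiable on (0,1), satisfies −ε u''(x) + u'(x) = f(x) for all x ∈ (0,1) and u(0) = u(1) = 0, then |u''(x)| ≤ (2/ε) ‖f‖_∞ for all x ∈ (0,1), where ‖f‖_∞ = sup_{s∈[0,1]} |f(s)|. -/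
/-!
Differentiating the equation shows that `v = u'` solves `ε v' = v - f` with `v 0 = v 1`: the
latter because `ε u' - u` is an antiderivative of `-f`, which has zero integral, and `u 0 = u 1`.
For such `v` the weighted function `exp (-x/ε) (v x - M)` is nondecreasing whenever `f ≤ M`, and
the periodic boundary condition forces it to be nonpositive, so `|u'| ≤ ‖f‖_∞`. Then
`|u''| = |u' - f| / ε ≤ 2 ‖f‖_∞ / ε`.
-/

open Set Real

section PeriodicFirstOrder

variable {a b ε M : ℝ} {f v v' : ℝ → ℝ}

theorem monotoneOn_exp_mul_sub_of_mul_deriv_eq_sub (hε : 0 < ε)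
    (hv : ContinuousOn v (Icc a b)) (hv' : ∀ x ∈ Ioo a b, HasDerivAt v (v' x) x)
    (hode : ∀ x ∈ Ioo a b, ε * v' x = v x - f x) (hfM : ∀ x ∈ Ioo a b, f x ≤ M) :
    MonotoneOn (fun x => exp (-x / ε) * (v x - M)) (Icc a b) := by
  have hderiv : ∀ x ∈ Ioo a b,
      HasDerivAt (fun x => exp (-x / ε) * (v x - M)) (exp (-x / ε) * (M - f x) / ε) x := by
    intro x hx
    have hexp : HasDerivAt (fun x => exp (-x / ε)) (exp (-x / ε) * (-1 / ε)) x :=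
      (hasDerivAt_exp _).comp x ((hasDerivAt_id x).neg.div_const ε)
    refine (hexp.mul ((hv' x hx).sub_const M)).congr_deriv ?_
    have hv'x : v' x = (v x - f x) / ε := by rw [← hode x hx]; field_simp
    rw [hv'x]
    field_simp
    ring
  refine monotoneOn_of_hasDerivWithinAt_nonneg (f' := fun x => exp (-x / ε) * (M - f x) / ε)
    (convex_Icc a b) ((continuous_exp.comp (continuous_neg.div_const ε)).continuousOn.mul
      (hv.sub continuousOn_const)) (fun x hx => ?_) (fun x hx => ?_) <;> rw [interior_Icc] at hx
  · exact (hderiv x hx).hasDerivWithinAt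
  · have := hfM x hx
    positivity

theorem le_of_mul_deriv_eq_sub_of_eq (hab : a < b) (hε : 0 < ε)
    (hv : ContinuousOn v (Icc a b)) (hv' : ∀ x ∈ Ioo a b, HasDerivAt v (v' x) x)
    (hode : ∀ x ∈ Ioo a b, ε * v' x = v x - f x) (hfM : ∀ x ∈ Ioo a b, f x ≤ M)
    (hvab : v a = v b) : ∀ x ∈ Icc a b, v x ≤ M := by
  have hmono := monotoneOn_exp_mul_sub_of_mul_deriv_eq_sub hε hv hv' hode hfM
  have ha : a ∈ Icc a b := left_mem_Icc.2 hab.le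
  have hb : b ∈ Icc a b := right_mem_Icc.2 hab.le
  have hexp_lt : exp (-b / ε) < exp (-a / ε) := exp_lt_exp.2 (by gcongr)
  have hvb : v b - M ≤ 0 := by
    have := hmono ha hb hab.le
    simp only [hvab] at this
    nlinarith
  intro x hx
  have hvx := nonpos_of_mul_nonpos_right
    ((hmono hx hb hx.2).trans (mul_nonpos_of_nonneg_of_nonpos (exp_pos _).le hvb)) (exp_pos _)
  exact sub_nonpos.1 hvx

theorem abs_le_of_mul_deriv_eq_sub_of_eq (hab : a < b) (hε : 0 < ε)
    (hv : ContinuousOn v (Icc a b)) (hv' : ∀ x ∈ Ioo a b, HasDerivAt v (v' x) x)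
    (hode : ∀ x ∈ Ioo a b, ε * v' x = v x - f x) (hfM : ∀ x ∈ Ioo a b, |f x| ≤ M)
    (hvab : v a = v b) : ∀ x ∈ Icc a b, |v x| ≤ M := by
  have hle := le_of_mul_deriv_eq_sub_of_eq hab hε hv hv' hode
    (fun x hx => (abs_le.1 (hfM x hx)).2) hvab
  have hge := le_of_mul_deriv_eq_sub_of_eq (f := -f) (v' := -v') hab hε hv.neg
    (fun x hx => (hv' x hx).neg) (fun x hx => by simp [hode x hx]; ring)
    (fun x hx => by simpa using neg_le.1 (abs_le.1 (hfM x hx)).1) (by simp [hvab])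
  exact fun x hx => abs_le.2 ⟨by simpa using neg_le.1 (hge x hx), hle x hx⟩

theorem deriv_left_eq_right_of_mul_deriv_eq_sub (hab : a ≤ b) (hf : ContinuousOn f (Icc a b))
    (hf0 : ∫ s in a..b, f s = 0) {u u' u'' : ℝ → ℝ}
    (hu' : ∀ x ∈ Icc a b, HasDerivWithinAt u (u' x) (Icc a b) x)
    (hu'c : ContinuousOn u' (Icc a b)) (hu'' : ∀ x ∈ Ioo a b, HasDerivAt u' (u'' x) x)
    (hode : ∀ x ∈ Ioo a b, ε * u'' x = u' x - f x) (hε : ε ≠ 0) (hu : u a = u b) :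
    u' a = u' b := by
  have hw : ∀ x ∈ Ioo a b, HasDerivAt (fun y => ε * u' y - u y) (-f x) x := by
    intro x hx
    have := ((hu'' x hx).const_mul ε).sub
      ((hu' x (Ioo_subset_Icc_self hx)).hasDerivAt (Icc_mem_nhds hx.1 hx.2))
    rwa [hode x hx, sub_sub_cancel_left] at this
  have hftc := intervalIntegral.integral_eq_sub_of_hasDerivAt_of_le (f := fun y => ε * u' y - u y)
    hab ((continuousOn_const.mul hu'c).sub fun x hx => (hu' x hx).continuousWithinAt) hw
    (hf.neg.intervalIntegrable_of_Icc hab)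
  simp only [intervalIntegral.integral_neg, hf0, hu] at hftc
  exact mul_left_cancel₀ hε (by linarith)

end PeriodicFirstOrder

/-- If `f` is continuous on `[0,1]` with zero average and `u` is a `C¹`
function on `[0,1]`, twice differentiable on `(0,1)`, solving `−ε u'' + u' = f` on
`(0,1)` with `u(0) = u(1) = 0`, then `|u''(x)| ≤ (2/ε) ‖f‖_∞` for all `x ∈ (0,1)`. -/
theorem statement12 (ε : ℝ) (hε : 0 < ε) (f : ℝ → ℝ)
    (hf : ContinuousOn f (Set.Icc 0 1))
    (hf0 : (∫ s in (0 : ℝ)..1, f s) = 0)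
    (u u' u'' : ℝ → ℝ)
    (hu' : ∀ x ∈ Set.Icc (0 : ℝ) 1, HasDerivWithinAt u (u' x) (Set.Icc 0 1) x)
    (hu'c : ContinuousOn u' (Set.Icc 0 1))
    (hu'' : ∀ x ∈ Set.Ioo (0 : ℝ) 1, HasDerivAt u' (u'' x) x)
    (hode : ∀ x ∈ Set.Ioo (0 : ℝ) 1, -ε * u'' x + u' x = f x)
    (hu0 : u 0 = 0) (hu1 : u 1 = 0) :
    ∀ x ∈ Set.Ioo (0 : ℝ) 1,
      |u'' x| ≤ (2 / ε) * ⨆ s : Set.Icc (0 : ℝ) 1, |f (s : ℝ)| := by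
  set M := ⨆ s : Icc (0 : ℝ) 1, |f s|
  have hfM : ∀ x ∈ Icc (0 : ℝ) 1, |f x| ≤ M := fun x hx =>
    le_ciSup (isCompact_range (hf.domRestrict.abs)).bddAbove ⟨x, hx⟩
  have hode' : ∀ x ∈ Ioo (0 : ℝ) 1, ε * u'' x = u' x - f x := fun x hx => by
    linarith [hode x hx]
  have hu'_per : u' 0 = u' 1 := deriv_left_eq_right_of_mul_deriv_eq_sub zero_le_one hf hf0
    hu' hu'c hu'' hode' hε.ne' (hu0.trans hu1.symm)
  have hu'M := abs_le_of_mul_deriv_eq_sub_of_eq zero_lt_one hε hu'c hu'' hode'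
    (fun x hx => hfM x (Ioo_subset_Icc_self hx)) hu'_per
  intro x hx
  have hxI := Ioo_subset_Icc_self hx
  rw [div_mul_eq_mul_div, le_div_iff₀' hε, ← abs_of_pos hε, ← abs_mul, hode' x hx]
  calc |u' x - f x| ≤ |u' x| + |f x| := abs_sub _ _
    _ ≤ 2 * M := by linarith [hu'M x hxI, hfM x hxI]
end

section
/- Let a < b with h = b − a, let u : [a,b] → ℝ be differentiable with |u'(x)| ≤ M for all x ∈ [a,b], and let ℓ : [a,b] → ℝ be the affine function with ℓ(a) = u(a) and ℓ(b) = u(b). Then ∫_a^b (u(x) − ℓ(x))² dx ≤ (h³/2) M². -/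
/-! The interpolation error `g = u - ℓ` is the combination
`(b - a) g(x) = (b - x) (u x - u a) - (x - a) (u b - u x)`, so the mean value bound `|u'| ≤ M`
gives `(b - a) |g x| ≤ 2 M (x - a) (b - x)`. Since `4 (x - a) (b - x) ≤ (b - a)²`, squaring
yields `g(x)² ≤ M² (x - a) (b - x)`, whose integral over `[a, b]` is `M² (b - a)³ / 6`. -/

open Set

lemma interpolation_error_mul_eq {a b c d x : ℝ} {u l : ℝ → ℝ} (hl : ∀ x, l x = c * x + d)
    (hla : l a = u a) (hlb : l b = u b) :
    (b - a) * (u x - l x) = (b - x) * (u x - u a) - (x - a) * (u b - u x) := by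
  rw [← hla, ← hlb, hl, hl, hl]
  ring

lemma sq_interpolation_error_le {a b c d x M : ℝ} {u l : ℝ → ℝ} (hab : a < b)
    (hx : x ∈ Icc a b) (hl : ∀ x, l x = c * x + d) (hla : l a = u a) (hlb : l b = u b)
    (hxa : |u x - u a| ≤ M * (x - a)) (hbx : |u b - u x| ≤ M * (b - x)) :
    (u x - l x) ^ 2 ≤ M ^ 2 * ((x - a) * (b - x)) := by
  have hxa0 : 0 ≤ x - a := sub_nonneg.2 hx.1
  have hbx0 : 0 ≤ b - x := sub_nonneg.2 hx.2
  have habs : (b - a) * |u x - l x| ≤ 2 * M * ((x - a) * (b - x)) :=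
    calc (b - a) * |u x - l x| = |(b - x) * (u x - u a) - (x - a) * (u b - u x)| := by
          rw [← interpolation_error_mul_eq hl hla hlb, abs_mul, abs_of_pos (sub_pos.2 hab)]
      _ ≤ (b - x) * |u x - u a| + (x - a) * |u b - u x| := by
          refine (abs_sub _ _).trans (le_of_eq ?_)
          rw [abs_mul, abs_mul, abs_of_nonneg hxa0, abs_of_nonneg hbx0]
      _ ≤ (b - x) * (M * (x - a)) + (x - a) * (M * (b - x)) := by gcongr
      _ = 2 * M * ((x - a) * (b - x)) := by ring
  have hprod : 4 * ((x - a) * (b - x)) ≤ (b - a) ^ 2 := by nlinarith [sq_nonneg (a + b - 2 * x)]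
  have hsq : (b - a) ^ 2 * (u x - l x) ^ 2 ≤ (b - a) ^ 2 * (M ^ 2 * ((x - a) * (b - x))) :=
    calc (b - a) ^ 2 * (u x - l x) ^ 2 = ((b - a) * |u x - l x|) ^ 2 := by rw [mul_pow, sq_abs]
      _ ≤ (2 * M * ((x - a) * (b - x))) ^ 2 := by gcongr
      _ = M ^ 2 * ((x - a) * (b - x)) * (4 * ((x - a) * (b - x))) := by ring
      _ ≤ M ^ 2 * ((x - a) * (b - x)) * (b - a) ^ 2 := by gcongr
      _ = (b - a) ^ 2 * (M ^ 2 * ((x - a) * (b - x))) := by ring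
  exact le_of_mul_le_mul_left hsq (pow_pos (sub_pos.2 hab) 2)

lemma integral_sub_mul_sub (a b : ℝ) : ∫ x in a..b, (x - a) * (b - x) = (b - a) ^ 3 / 6 := by
  have hexpand : (fun x => (x - a) * (b - x)) = fun x => -x ^ 2 + (a + b) * x - a * b := by
    ext x; ring
  rw [hexpand, intervalIntegral.integral_sub, intervalIntegral.integral_add,
    intervalIntegral.integral_neg, intervalIntegral.integral_const_mul]
  · simp only [integral_pow, integral_id, intervalIntegral.integral_const, smul_eq_mul]
    ring
  all_goals exact Continuous.intervalIntegrable (by fun_prop) _ _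

/-- If `u` is differentiable on `[a,b]` with `|u'| ≤ M` and `ℓ` is the
affine interpolant of `u` at the endpoints `a`, `b`, then with `h = b − a`,
`∫_a^b (u − ℓ)² ≤ (h³/2) M²`. -/
theorem statement14 (a b : ℝ) (hab : a < b) (h : ℝ) (hh : h = b - a)
    (u u' : ℝ → ℝ) (M : ℝ)
    (hu : ∀ x ∈ Set.Icc a b, HasDerivWithinAt u (u' x) (Set.Icc a b) x)
    (hM : ∀ x ∈ Set.Icc a b, |u' x| ≤ M)
    (l : ℝ → ℝ) (hl : ∃ c d : ℝ, ∀ x, l x = c * x + d)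
    (hla : l a = u a) (hlb : l b = u b) :
    (∫ x in a..b, (u x - l x) ^ 2) ≤ h ^ 3 / 2 * M ^ 2 := by
  obtain ⟨c, d, hl⟩ := hl
  have hlip : ∀ x ∈ Icc a b, ∀ y ∈ Icc a b, |u y - u x| ≤ M * |y - x| := fun x hx y hy =>
    (convex_Icc a b).norm_image_sub_le_of_norm_hasDerivWithin_le hu hM hx hy
  have hpoint : ∀ x ∈ Icc a b, (u x - l x) ^ 2 ≤ M ^ 2 * ((x - a) * (b - x)) := by
    intro x hx
    have ha : a ∈ Icc a b := left_mem_Icc.2 hab.le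
    have hb : b ∈ Icc a b := right_mem_Icc.2 hab.le
    refine sq_interpolation_error_le hab hx hl hla hlb ?_ ?_
    · simpa [abs_of_nonneg (sub_nonneg.2 hx.1)] using hlip a ha x hx
    · simpa [abs_of_nonneg (sub_nonneg.2 hx.2)] using hlip x hx b hb
  have hcont : ContinuousOn (fun x => (u x - l x) ^ 2) (Icc a b) := by
    have hu_cont : ContinuousOn u (Icc a b) := fun x hx => (hu x hx).continuousWithinAt
    have hl_cont : Continuous l := by simp only [funext hl]; fun_prop
    exact (hu_cont.sub hl_cont.continuousOn).pow 2
  calc (∫ x in a..b, (u x - l x) ^ 2) ≤ ∫ x in a..b, M ^ 2 * ((x - a) * (b - x)) :=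
        intervalIntegral.integral_mono_on hab.le (hcont.intervalIntegrable_of_Icc hab.le)
          (Continuous.intervalIntegrable (by fun_prop) _ _) hpoint
    _ = M ^ 2 * ((b - a) ^ 3 / 6) := by
        rw [intervalIntegral.integral_const_mul, integral_sub_mul_sub]
    _ ≤ h ^ 3 / 2 * M ^ 2 := by
        subst hh
        nlinarith [pow_pos (sub_pos.2 hab) 3, sq_nonneg M]
end

section
/- Let n ≥ 1, set h = 1/n and x_i = i·h for i = 0,…,n. Let u : [0,1] → ℝ be differentiable with |u'(x)| ≤ M for all x ∈ [0,1], and let u_I : [0,1] → ℝ be the piecewise linear interpolant of u: u_I(x_i) = u(x_i) for all i and u_I is affine on each subinterval [x_{i−1}, x_i]. Then ∫₀¹ (u(x) − u_I(x))² dx ≤ (h²/2) M². -/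
/-!
On a cell `[a, b]` of the mesh the error `e = u - u_I` vanishes at both nodes, and it is
`2M`-Lipschitz because the slope of `u_I` is a difference quotient of `u`. Hence
`|e x| ≤ 2M · min (x - a) (b - x)`, and integrating this tent over the cell gives
`∫ e² ≤ M² h³ / 3`. Summing over the `n = 1 / h` cells yields `M² h² / 3 ≤ h² M² / 2`.
-/

open Set MeasureTheory intervalIntegral
open scoped NNReal

theorem integral_sq_le_of_abs_le_mul_abs_sub {f : ℝ → ℝ} {a b p L : ℝ} (hab : a ≤ b)
    (hf : ContinuousOn f (Icc a b)) (hbound : ∀ x ∈ Icc a b, |f x| ≤ L * |x - p|) :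
    ∫ x in a..b, f x ^ 2 ≤ L ^ 2 * ((b - p) ^ 3 - (a - p) ^ 3) / 3 := by
  calc ∫ x in a..b, f x ^ 2 ≤ ∫ x in a..b, L ^ 2 * (x - p) ^ 2 := by
        refine integral_mono_on hab ((hf.pow 2).intervalIntegrable_of_Icc hab)
          (Continuous.intervalIntegrable (by fun_prop) a b) fun x hx => ?_
        rw [← mul_pow]
        refine sq_le_sq.mpr ((hbound x hx).trans ?_)
        rw [abs_mul]
        gcongr
        exact le_abs_self L
    _ = L ^ 2 * ((b - p) ^ 3 - (a - p) ^ 3) / 3 := by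
        have hshift : ∫ x in a..b, (x - p) ^ 2 = ∫ x in a - p..b - p, x ^ 2 :=
          integral_comp_sub_right (· ^ 2) p
        rw [intervalIntegral.integral_const_mul, hshift, integral_pow]
        ring

theorem integral_sq_le_of_lipschitzOnWith_of_eq_zero {f : ℝ → ℝ} {a b : ℝ} {L : ℝ≥0}
    (hab : a ≤ b) (hf : LipschitzOnWith L f (Icc a b)) (ha : f a = 0) (hb : f b = 0) :
    ∫ x in a..b, f x ^ 2 ≤ L ^ 2 * (b - a) ^ 3 / 12 := by
  obtain ⟨m, hm⟩ : ∃ m : ℝ, m = (a + b) / 2 := ⟨_, rfl⟩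
  have ham : a ≤ m := by linarith
  have hmb : m ≤ b := by linarith
  have hleft : Icc a m ⊆ Icc a b := Icc_subset_Icc_right hmb
  have hright : Icc m b ⊆ Icc a b := Icc_subset_Icc_left ham
  have hcont := hf.continuousOn
  have hsq : ContinuousOn (fun x => f x ^ 2) (Icc a b) := hcont.pow 2
  have hbound : ∀ p ∈ Icc a b, f p = 0 → ∀ x ∈ Icc a b, |f x| ≤ L * |x - p| := by
    intro p hp hfp x hx
    simpa [hfp, Real.dist_eq] using hf.dist_le_mul x hx p hp
  have hL := integral_sq_le_of_abs_le_mul_abs_sub ham (hcont.mono hleft)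
    fun x hx => hbound a (left_mem_Icc.2 hab) ha x (hleft hx)
  have hR := integral_sq_le_of_abs_le_mul_abs_sub hmb (hcont.mono hright)
    fun x hx => hbound b (right_mem_Icc.2 hab) hb x (hright hx)
  rw [← integral_add_adjacent_intervals ((hsq.mono hleft).intervalIntegrable_of_Icc ham)
    ((hsq.mono hright).intervalIntegrable_of_Icc hmb)]
  calc _ ≤ _ := add_le_add hL hR
    _ = L ^ 2 * (b - a) ^ 3 / 12 := by subst hm; ring

theorem abs_slope_le_of_lipschitzOnWith {u : ℝ → ℝ} {a b c d : ℝ} {K : ℝ≥0} (hab : a < b)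
    (hu : LipschitzOnWith K u (Icc a b)) (ha : c * a + d = u a) (hb : c * b + d = u b) :
    |c| ≤ K := by
  have hdiff : |u b - u a| ≤ K * (b - a) := by
    simpa [Real.dist_eq, abs_of_pos (sub_pos.2 hab)] using
      hu.dist_le_mul b (right_mem_Icc.2 hab.le) a (left_mem_Icc.2 hab.le)
  rw [← ha, ← hb, show c * b + d - (c * a + d) = c * (b - a) by ring, abs_mul,
    abs_of_pos (sub_pos.2 hab)] at hdiff
  exact le_of_mul_le_mul_right hdiff (sub_pos.2 hab)

theorem integral_sq_sub_le_of_eqOn_affine {u g : ℝ → ℝ} {a b c d : ℝ} {K : ℝ≥0} (hab : a ≤ b)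
    (hu : LipschitzOnWith K u (Icc a b)) (hg : EqOn g (fun x => c * x + d) (Icc a b))
    (ha : g a = u a) (hb : g b = u b) :
    ∫ x in a..b, (u x - g x) ^ 2 ≤ K ^ 2 * (b - a) ^ 3 / 3 := by
  rcases hab.eq_or_lt with rfl | hlt
  · simp
  have hga := hg (left_mem_Icc.2 hab)
  have hgb := hg (right_mem_Icc.2 hab)
  have hua : c * a + d = u a := hga.symm.trans ha
  have hub : c * b + d = u b := hgb.symm.trans hb
  have hc : |c| ≤ K := abs_slope_le_of_lipschitzOnWith hlt hu hua hub
  have herr : LipschitzOnWith (2 * K) (fun x => u x - (c * x + d)) (Icc a b) :=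
    LipschitzOnWith.of_dist_le_mul fun x hx y hy => by
      calc dist (u x - (c * x + d)) (u y - (c * y + d)) = |(u x - u y) - c * (x - y)| := by
            rw [Real.dist_eq]; congr 1; ring
        _ ≤ |u x - u y| + |c| * |x - y| := by rw [← abs_mul]; exact abs_sub _ _
        _ ≤ K * |x - y| + K * |x - y| := by
            gcongr
            simpa [Real.dist_eq] using hu.dist_le_mul x hx y hy
        _ = ↑(2 * K) * dist x y := by push_cast; rw [Real.dist_eq]; ring
  have hcongr : ∫ x in a..b, (u x - g x) ^ 2 = ∫ x in a..b, (u x - (c * x + d)) ^ 2 :=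
    integral_congr fun x hx => by rw [uIcc_of_le hab] at hx; simp only [hg hx]
  rw [hcongr]
  calc _ ≤ ↑(2 * K) ^ 2 * (b - a) ^ 3 / 12 :=
        integral_sq_le_of_lipschitzOnWith_of_eq_zero hab herr (sub_eq_zero.2 hua.symm)
          (sub_eq_zero.2 hub.symm)
    _ = K ^ 2 * (b - a) ^ 3 / 3 := by push_cast; ring

theorem intervalIntegrable_sq_sub_of_eqOn_affine {u g : ℝ → ℝ} {a b c d : ℝ} (hab : a ≤ b)
    (hu : ContinuousOn u (Icc a b)) (hg : EqOn g (fun x => c * x + d) (Icc a b)) :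
    IntervalIntegrable (fun x => (u x - g x) ^ 2) volume a b :=
  ((hu.sub ((by fun_prop : Continuous fun x => c * x + d).continuousOn.congr hg)).pow 2)
    |>.intervalIntegrable_of_Icc hab

theorem integral_le_mul_of_forall_uniform_cells {F : ℝ → ℝ} {n : ℕ} {h B : ℝ}
    (hint : ∀ k < n, IntervalIntegrable F volume (k * h) ((k + 1) * h))
    (hle : ∀ k < n, ∫ x in k * h..(k + 1) * h, F x ≤ B) :
    ∫ x in 0..n * h, F x ≤ n * B := by
  have hsum := sum_integral_adjacent_intervals (a := fun k : ℕ => k * h) (f := F) (μ := volume)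
    (n := n) fun k hk => by simpa using hint k hk
  simp only [Nat.cast_zero, zero_mul, Nat.cast_succ] at hsum
  rw [← hsum]
  simpa using Finset.sum_le_sum fun k hk => hle k (Finset.mem_range.1 hk)

/-- If `u` is differentiable on `[0,1]` with `|u'| ≤ M` and `u_I` is its
piecewise linear interpolant on the uniform mesh `x_i = i·h`, `h = 1/n`, then
`∫₀¹ (u − u_I)² ≤ (h²/2) M²`. -/
theorem statement15 (n : ℕ) (hn : 1 ≤ n) (h : ℝ) (hh : h = 1 / n)
    (u u' : ℝ → ℝ) (M : ℝ)
    (hu : ∀ x ∈ Set.Icc (0 : ℝ) 1, HasDerivWithinAt u (u' x) (Set.Icc 0 1) x)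
    (hM : ∀ x ∈ Set.Icc (0 : ℝ) 1, |u' x| ≤ M)
    (uI : ℝ → ℝ)
    (hnode : ∀ i : ℕ, i ≤ n → uI ((i : ℝ) * h) = u ((i : ℝ) * h))
    (haff : ∀ i : ℕ, 1 ≤ i → i ≤ n → ∃ c d : ℝ,
      ∀ x ∈ Set.Icc (((i : ℝ) - 1) * h) ((i : ℝ) * h), uI x = c * x + d) :
    (∫ x in (0 : ℝ)..1, (u x - uI x) ^ 2) ≤ h ^ 2 / 2 * M ^ 2 := by
  have hnh : (n : ℝ) * h = 1 := by rw [hh]; field_simp [Nat.cast_ne_zero.2 (by omega : n ≠ 0)]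
  have hh0 : 0 ≤ h := by rw [hh]; positivity
  have hM0 : 0 ≤ M := (abs_nonneg _).trans (hM 0 (left_mem_Icc.2 zero_le_one))
  have hlip : LipschitzOnWith M.toNNReal u (Icc 0 1) :=
    (convex_Icc 0 1).lipschitzOnWith_of_nnnorm_hasDerivWithin_le hu fun x hx => by
      simpa [Real.le_toNNReal_iff_coe_le hM0] using hM x hx
  have hcell_le : ∀ k : ℕ, (k : ℝ) * h ≤ (k + 1) * h := fun k => by nlinarith
  have hcell_sub : ∀ k < n, Icc ((k : ℝ) * h) ((k + 1) * h) ⊆ Icc 0 1 := fun k hk => by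
    have hkn : (k : ℝ) + 1 ≤ n := by exact_mod_cast hk
    exact Icc_subset_Icc (by positivity) (by nlinarith)
  have hcell_aff :
      ∀ k < n, ∃ c d : ℝ, EqOn uI (fun x => c * x + d) (Icc (k * h) ((k + 1) * h)) := by
    intro k hk
    obtain ⟨c, d, hcd⟩ := haff (k + 1) (by omega) hk
    exact ⟨c, d, fun x hx => hcd x (by push_cast; simpa using hx)⟩
  have hnode_succ : ∀ k < n, uI ((k + 1) * h) = u ((k + 1) * h) := fun k hk => by
    exact_mod_cast hnode (k + 1) hk
  rw [← hnh]
  calc _ ≤ n * (M.toNNReal ^ 2 * h ^ 3 / 3) := by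
        refine integral_le_mul_of_forall_uniform_cells (fun k hk => ?_) (fun k hk => ?_)
          <;> obtain ⟨c, d, hcd⟩ := hcell_aff k hk
        · exact intervalIntegrable_sq_sub_of_eqOn_affine (hcell_le k)
            (hlip.continuousOn.mono (hcell_sub k hk)) hcd
        · refine (integral_sq_sub_le_of_eqOn_affine (hcell_le k) (hlip.mono (hcell_sub k hk)) hcd
            (hnode k hk.le) (hnode_succ k hk)).trans_eq ?_
          ring
    _ ≤ h ^ 2 / 2 * M ^ 2 := by
        rw [Real.coe_toNNReal _ hM0]
        nlinarith [mul_nonneg (sq_nonneg h) (sq_nonneg M)]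
end

section
/- Let a < b with h = b − a, let u : [a,b] → ℝ be twice continuously differentiable, and let ℓ : [a,b] → ℝ be the affine function with ℓ(a) = u(a) and ℓ(b) = u(b). Then ∫_a^b (u(x) − ℓ(x))² dx ≤ (h⁴/π²) ∫_a^b u''(x)² dx. -/
/-!
Put `e = u - ℓ`, so that `e(a) = e(b) = 0` and `e'' = u''`. Integrating by parts against the
Green's function of `d²/dx²` with Dirichlet conditions gives, for `x ∈ [a,b]`,
`h e(x) = -((b - x) ∫_a^x (t - a) e''(t) dt + (x - a) ∫_x^b (b - t) e''(t) dt)`.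
Cauchy–Schwarz on each integral and `(x - a)(b - x) ≤ h²/4` give `e(x)² ≤ (h³/24) ∫_a^b e''²`,
hence `∫_a^b e² ≤ (h⁴/24) ∫_a^b e''²`, which is stronger than the claim since `π² < 24`.
-/

open Set intervalIntegral
open MeasureTheory (volume)

theorem sq_integral_mul_le_integral_sq_mul_integral_sq {c d : ℝ} (hcd : c ≤ d) {f g : ℝ → ℝ}
    (hf : ContinuousOn f (Icc c d)) (hg : ContinuousOn g (Icc c d)) :
    (∫ t in c..d, f t * g t) ^ 2 ≤ (∫ t in c..d, f t ^ 2) * ∫ t in c..d, g t ^ 2 := by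
  have hf2 : IntervalIntegrable (fun t => f t ^ 2) volume c d :=
    (hf.pow 2).intervalIntegrable_of_Icc hcd
  have hg2 : IntervalIntegrable (fun t => g t ^ 2) volume c d :=
    (hg.pow 2).intervalIntegrable_of_Icc hcd
  have hfg : IntervalIntegrable (fun t => f t * g t) volume c d :=
    (hf.mul hg).intervalIntegrable_of_Icc hcd
  have hquad : ∀ s : ℝ, 0 ≤ (∫ t in c..d, f t ^ 2) * (s * s) + 2 * (∫ t in c..d, f t * g t) * s
      + ∫ t in c..d, g t ^ 2 := by
    intro s
    have hexpand : ∫ t in c..d, (s * f t + g t) ^ 2 = (∫ t in c..d, f t ^ 2) * (s * s)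
        + 2 * (∫ t in c..d, f t * g t) * s + ∫ t in c..d, g t ^ 2 := by
      have hsq : ∀ t, (s * f t + g t) ^ 2 = s * s * f t ^ 2 + 2 * s * (f t * g t) + g t ^ 2 :=
        fun t => by ring
      simp_rw [hsq]
      rw [integral_add ((hf2.const_mul _).add (hfg.const_mul _)) hg2,
        integral_add (hf2.const_mul _) (hfg.const_mul _), integral_const_mul, integral_const_mul]
      ring
    exact hexpand ▸ integral_nonneg hcd fun t _ => sq_nonneg _
  have := discrim_le_zero hquad
  rw [discrim] at this
  linarith

theorem integral_sub_left_sq (c d : ℝ) : ∫ t in c..d, (t - c) ^ 2 = (d - c) ^ 3 / 3 := by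
  simp [integral_comp_sub_right (fun s => s ^ 2)]
  norm_num

theorem integral_sub_right_sq (c d : ℝ) : ∫ t in c..d, (d - t) ^ 2 = (d - c) ^ 3 / 3 := by
  simp [integral_comp_sub_left (fun s => s ^ 2)]
  norm_num

theorem sq_integral_sub_left_mul_le {c d : ℝ} {g : ℝ → ℝ} (hcd : c ≤ d)
    (hg : ContinuousOn g (Icc c d)) :
    (∫ t in c..d, (t - c) * g t) ^ 2 ≤ (d - c) ^ 3 / 3 * ∫ t in c..d, g t ^ 2 := by
  simpa only [integral_sub_left_sq] using sq_integral_mul_le_integral_sq_mul_integral_sq hcd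
    (f := fun t => t - c) (continuousOn_id.sub continuousOn_const) hg

theorem sq_integral_sub_right_mul_le {c d : ℝ} {g : ℝ → ℝ} (hcd : c ≤ d)
    (hg : ContinuousOn g (Icc c d)) :
    (∫ t in c..d, (d - t) * g t) ^ 2 ≤ (d - c) ^ 3 / 3 * ∫ t in c..d, g t ^ 2 := by
  simpa only [integral_sub_right_sq] using sq_integral_mul_le_integral_sq_mul_integral_sq hcd
    (f := fun t => d - t) (continuousOn_const.sub continuousOn_id) hg

theorem integral_eq_sub_of_hasDerivWithinAt_Icc {c d : ℝ} (hcd : c ≤ d) {F f : ℝ → ℝ}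
    (hF : ∀ t ∈ Icc c d, HasDerivWithinAt F (f t) (Icc c d) t)
    (hf : ContinuousOn f (Icc c d)) :
    ∫ t in c..d, f t = F d - F c :=
  integral_eq_sub_of_hasDerivAt_of_le hcd (fun t ht => (hF t ht).continuousWithinAt)
    (fun t ht => (hF t (Ioo_subset_Icc_self ht)).hasDerivAt (Icc_mem_nhds ht.1 ht.2))
    (hf.intervalIntegrable_of_Icc hcd)

section TaylorRemainder

variable {u u' u'' : ℝ → ℝ} {c d : ℝ}

theorem integral_sub_left_mul_second_deriv (hcd : c ≤ d)
    (hu : ∀ t ∈ Icc c d, HasDerivWithinAt u (u' t) (Icc c d) t)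
    (hu' : ∀ t ∈ Icc c d, HasDerivWithinAt u' (u'' t) (Icc c d) t)
    (hu'' : ContinuousOn u'' (Icc c d)) :
    ∫ t in c..d, (t - c) * u'' t = (d - c) * u' d - (u d - u c) := by
  have hF : ∀ t ∈ Icc c d,
      HasDerivWithinAt (fun t => (t - c) * u' t - u t) ((t - c) * u'' t) (Icc c d) t := by
    intro t ht
    exact ((((hasDerivAt_id' t).hasDerivWithinAt.sub_const c).mul (hu' t ht)).sub
      (hu t ht)).congr_deriv (by ring)
  rw [integral_eq_sub_of_hasDerivWithinAt_Icc hcd hF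
    ((continuousOn_id.sub continuousOn_const).mul hu'')]
  ring

theorem integral_sub_right_mul_second_deriv (hcd : c ≤ d)
    (hu : ∀ t ∈ Icc c d, HasDerivWithinAt u (u' t) (Icc c d) t)
    (hu' : ∀ t ∈ Icc c d, HasDerivWithinAt u' (u'' t) (Icc c d) t)
    (hu'' : ContinuousOn u'' (Icc c d)) :
    ∫ t in c..d, (d - t) * u'' t = (u d - u c) - (d - c) * u' c := by
  have hF : ∀ t ∈ Icc c d,
      HasDerivWithinAt (fun t => (d - t) * u' t + u t) ((d - t) * u'' t) (Icc c d) t := by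
    intro t ht
    exact ((((hasDerivAt_id' t).hasDerivWithinAt.const_sub d).mul (hu' t ht)).add
      (hu t ht)).congr_deriv (by ring)
  rw [integral_eq_sub_of_hasDerivWithinAt_Icc hcd hF
    ((continuousOn_const.sub continuousOn_id).mul hu'')]
  ring

end TaylorRemainder

theorem sq_le_of_mul_eq_neg_add {h s t P Q E I : ℝ} (hs : 0 ≤ s) (ht : 0 ≤ t) (hst : s + t = h)
    (hh : 0 < h) (hI : 0 ≤ I) (hP : P ^ 2 ≤ s ^ 3 / 3 * I) (hQ : Q ^ 2 ≤ t ^ 3 / 3 * I)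
    (hE : h * E = -(t * P + s * Q)) :
    E ^ 2 ≤ h ^ 3 / 24 * I := by
  have hst2 : (s * t) ^ 2 ≤ (h ^ 2 / 4) ^ 2 := by
    gcongr
    nlinarith [sq_nonneg (s - t)]
  have key : h ^ 2 * E ^ 2 ≤ h ^ 2 * (h ^ 3 / 24 * I) := calc
    h ^ 2 * E ^ 2 = (t * P + s * Q) ^ 2 := by rw [← mul_pow, hE, neg_sq]
    _ ≤ 2 * (t ^ 2 * P ^ 2) + 2 * (s ^ 2 * Q ^ 2) := by nlinarith [sq_nonneg (t * P - s * Q)]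
    _ ≤ 2 * (t ^ 2 * (s ^ 3 / 3 * I)) + 2 * (s ^ 2 * (t ^ 3 / 3 * I)) := by gcongr
    _ = 2 / 3 * (s * t) ^ 2 * h * I := by rw [← hst]; ring
    _ ≤ 2 / 3 * (h ^ 2 / 4) ^ 2 * h * I := by gcongr
    _ = h ^ 2 * (h ^ 3 / 24 * I) := by ring
  exact le_of_mul_le_mul_left key (by positivity)

section DirichletError

variable {a b : ℝ} {e e' e'' : ℝ → ℝ}

theorem sq_le_mul_integral_sq_second_deriv (hab : a < b)
    (he : ∀ x ∈ Icc a b, HasDerivWithinAt e (e' x) (Icc a b) x)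
    (he' : ∀ x ∈ Icc a b, HasDerivWithinAt e' (e'' x) (Icc a b) x)
    (he'' : ContinuousOn e'' (Icc a b)) (hea : e a = 0) (heb : e b = 0) {x : ℝ}
    (hx : x ∈ Icc a b) :
    e x ^ 2 ≤ (b - a) ^ 3 / 24 * ∫ t in a..b, e'' t ^ 2 := by
  have hax : Icc a x ⊆ Icc a b := Icc_subset_Icc_right hx.2
  have hxb : Icc x b ⊆ Icc a b := Icc_subset_Icc_left hx.1
  have hP := integral_sub_left_mul_second_deriv hx.1 (fun t ht => (he t (hax ht)).mono hax)
    (fun t ht => (he' t (hax ht)).mono hax) (he''.mono hax)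
  have hQ := integral_sub_right_mul_second_deriv hx.2 (fun t ht => (he t (hxb ht)).mono hxb)
    (fun t ht => (he' t (hxb ht)).mono hxb) (he''.mono hxb)
  have hsplit : (∫ t in a..x, e'' t ^ 2) + ∫ t in x..b, e'' t ^ 2 = ∫ t in a..b, e'' t ^ 2 :=
    integral_add_adjacent_intervals (((he''.mono hax).pow 2).intervalIntegrable_of_Icc hx.1)
      (((he''.mono hxb).pow 2).intervalIntegrable_of_Icc hx.2)
  have hleft : 0 ≤ ∫ t in a..x, e'' t ^ 2 := integral_nonneg hx.1 fun t _ => sq_nonneg (e'' t)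
  have hright : 0 ≤ ∫ t in x..b, e'' t ^ 2 := integral_nonneg hx.2 fun t _ => sq_nonneg (e'' t)
  refine sq_le_of_mul_eq_neg_add (P := ∫ t in a..x, (t - a) * e'' t)
    (Q := ∫ t in x..b, (b - t) * e'' t) (sub_nonneg.2 hx.1) (sub_nonneg.2 hx.2) (by ring)
    (sub_pos.2 hab) (integral_nonneg hab.le fun t _ => sq_nonneg (e'' t)) ?_ ?_ ?_
  · refine (sq_integral_sub_left_mul_le hx.1 (he''.mono hax)).trans ?_
    gcongr
    · have := sub_nonneg.2 hx.1; positivity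
    · linarith
  · refine (sq_integral_sub_right_mul_le hx.2 (he''.mono hxb)).trans ?_
    gcongr
    · have := sub_nonneg.2 hx.2; positivity
    · linarith
  · rw [hP, hQ, hea, heb]
    ring

theorem integral_sq_le_mul_integral_sq_second_deriv (hab : a < b)
    (he : ∀ x ∈ Icc a b, HasDerivWithinAt e (e' x) (Icc a b) x)
    (he' : ∀ x ∈ Icc a b, HasDerivWithinAt e' (e'' x) (Icc a b) x)
    (he'' : ContinuousOn e'' (Icc a b)) (hea : e a = 0) (heb : e b = 0) :
    ∫ x in a..b, e x ^ 2 ≤ (b - a) ^ 4 / 24 * ∫ t in a..b, e'' t ^ 2 := by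
  have hint : IntervalIntegrable (fun x => e x ^ 2) volume a b :=
    (ContinuousOn.pow (fun x hx => (he x hx).continuousWithinAt) 2).intervalIntegrable_of_Icc
      hab.le
  calc ∫ x in a..b, e x ^ 2
      ≤ ∫ _ in a..b, (b - a) ^ 3 / 24 * ∫ t in a..b, e'' t ^ 2 :=
        integral_mono_on hab.le hint intervalIntegrable_const
          fun x hx => sq_le_mul_integral_sq_second_deriv hab he he' he'' hea heb hx
    _ = (b - a) ^ 4 / 24 * ∫ t in a..b, e'' t ^ 2 := by
        rw [integral_const, smul_eq_mul]
        ring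

end DirichletError

/-- If `u` is twice continuously differentiable on `[a,b]` and `ℓ` is the
affine interpolant of `u` at the endpoints `a`, `b`, then with `h = b − a`,
`∫_a^b (u − ℓ)² ≤ (h⁴/π²) ∫_a^b (u'')²`. -/
theorem statement16 (a b : ℝ) (hab : a < b) (h : ℝ) (hh : h = b - a)
    (u u' u'' : ℝ → ℝ)
    (hu : ∀ x ∈ Set.Icc a b, HasDerivWithinAt u (u' x) (Set.Icc a b) x)
    (hu' : ∀ x ∈ Set.Icc a b, HasDerivWithinAt u' (u'' x) (Set.Icc a b) x)
    (hu''c : ContinuousOn u'' (Set.Icc a b))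
    (l : ℝ → ℝ) (hl : ∃ c d : ℝ, ∀ x, l x = c * x + d)
    (hla : l a = u a) (hlb : l b = u b) :
    (∫ x in a..b, (u x - l x) ^ 2) ≤ h ^ 4 / Real.pi ^ 2 * ∫ x in a..b, (u'' x) ^ 2 := by
  obtain ⟨c, d, hl⟩ := hl
  have hle : ∀ x, HasDerivWithinAt l c (Icc a b) x := fun x => by
    rw [funext hl]
    simpa using ((hasDerivAt_id x).const_mul c).add_const d |>.hasDerivWithinAt
  have herror := integral_sq_le_mul_integral_sq_second_deriv hab (e' := fun x => u' x - c)
    (fun x hx => (hu x hx).sub (hle x)) (fun x hx => (hu' x hx).sub_const c) hu''c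
    (by simp [hla]) (by simp [hlb])
  refine (hh ▸ herror).trans ?_
  gcongr
  · exact integral_nonneg hab.le fun t _ => sq_nonneg (u'' t)
  · nlinarith [Real.pi_le_four, Real.pi_pos]
end

section
/- Let n ≥ 1, set h = 1/n and x_i = i·h for i = 0,…,n. Let u : [0,1] → ℝ be twice continuously differentiable and let u_I : [0,1] → ℝ be the piecewise linear interpolant of u: u_I(x_i) = u(x_i) for all i and u_I is affine on each subinterval [x_{i−1}, x_i]. Then (∫₀¹ (u(x) − u_I(x))² dx)^{1/2} ≤ (h²/π) · (∫₀¹ u''(x)² dx)^{1/2}. -/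
/-! On a mesh cell `[p, q]` the error `e = u - u_I` vanishes at both endpoints and `e'' = u''`,
so `e` is recovered from `u''` through the Green's function of `-d²/dx²` with Dirichlet
conditions, which is bounded by `(q - p) / 4`. Hence `|e| ≤ (q - p) / 4 · ∫ |u''|`, and
Cauchy–Schwarz turns this into `∫ e² ≤ (q - p)⁴ / 16 · ∫ u''²` on every cell. Summing over the
cells gives `‖u - u_I‖ ≤ h² / 4 · ‖u''‖`, and `π ≤ 4`. -/

open MeasureTheory Set intervalIntegral Topology

lemma sq_intervalIntegral_le_mul_integral_sq {f : ℝ → ℝ} {a b : ℝ} (hab : a ≤ b)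
    (hf : IntervalIntegrable f volume a b)
    (hf2 : IntervalIntegrable (fun t => f t ^ 2) volume a b) :
    (∫ t in a..b, f t) ^ 2 ≤ (b - a) * ∫ t in a..b, f t ^ 2 := by
  have hexpand : ∀ s : ℝ, ∫ t in a..b, (f t - s) ^ 2 =
      (b - a) * (s * s) + (-2 * ∫ t in a..b, f t) * s + ∫ t in a..b, f t ^ 2 := by
    intro s
    have hsq : (fun t => (f t - s) ^ 2) = fun t => (f t ^ 2 - 2 * s * f t) + s ^ 2 := by
      ext t; ring
    rw [hsq, integral_add (hf2.sub (hf.const_mul _)) intervalIntegrable_const,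
      integral_sub hf2 (hf.const_mul _), intervalIntegral.integral_const_mul,
      intervalIntegral.integral_const, smul_eq_mul]
    ring
  have hdiscrim := discrim_le_zero fun s =>
    (hexpand s) ▸ integral_nonneg hab fun t _ => sq_nonneg (f t - s)
  rw [discrim] at hdiscrim
  linarith

lemma abs_integral_mul_le {f g : ℝ → ℝ} {p q L : ℝ} (hpq : p ≤ q)
    (hf : IntervalIntegrable f volume p q) (hg : ∀ t ∈ Icc p q, |g t| ≤ L) :
    |∫ t in p..q, g t * f t| ≤ L * ∫ t in p..q, |f t| := by
  rw [← intervalIntegral.integral_const_mul, ← Real.norm_eq_abs]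
  refine norm_integral_le_of_norm_le hpq (ae_of_all _ fun t ht => ?_) (hf.abs.const_mul L)
  rw [Real.norm_eq_abs, abs_mul]
  exact mul_le_mul_of_nonneg_right (hg t (Ioc_subset_Icc_self ht)) (abs_nonneg _)

lemma integral_sub_mul_eq_of_hasDerivWithinAt {e e' e'' : ℝ → ℝ} {s : Set ℝ} {p q c : ℝ}
    (hpq : p ≤ q) (hs : Icc p q ⊆ s)
    (he : ∀ t ∈ s, HasDerivWithinAt e (e' t) s t)
    (he' : ∀ t ∈ s, HasDerivWithinAt e' (e'' t) s t) (he'' : ContinuousOn e'' s) :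
    ∫ t in p..q, (t - c) * e'' t = ((q - c) * e' q - e q) - ((p - c) * e' p - e p) := by
  have hcont : ∀ {f f' : ℝ → ℝ}, (∀ t ∈ s, HasDerivWithinAt f (f' t) s t) →
      ContinuousOn f (Icc p q) :=
    fun hf t ht => (hf t (hs ht)).continuousWithinAt.mono hs
  refine integral_eq_sub_of_hasDerivAt_of_le hpq
    (((continuousOn_id.sub continuousOn_const).mul (hcont he')).sub (hcont he)) (fun t ht => ?_)
    (((continuousOn_id.sub continuousOn_const).mul (he''.mono hs)).intervalIntegrable_of_Icc hpq)
  have hnhds : s ∈ 𝓝 t := Filter.mem_of_superset (Icc_mem_nhds ht.1 ht.2) hs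
  have ht' : t ∈ s := hs (Ioo_subset_Icc_self ht)
  have hderiv : HasDerivAt (fun y => (y - c) * e' y - e y) (1 * e' t + (t - c) * e'' t - e' t) t :=
    (((hasDerivAt_id' t).sub_const c).mul ((he' t ht').hasDerivAt hnhds)).sub
      ((he t ht').hasDerivAt hnhds)
  exact hderiv.congr_deriv (by ring)

section Dirichlet

variable {e e' e'' : ℝ → ℝ} {a b : ℝ}

lemma sub_mul_eq_green_of_eq_zero
    (he : ∀ t ∈ Icc a b, HasDerivWithinAt e (e' t) (Icc a b) t)
    (he' : ∀ t ∈ Icc a b, HasDerivWithinAt e' (e'' t) (Icc a b) t)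
    (he'' : ContinuousOn e'' (Icc a b)) (ha : e a = 0) (hb : e b = 0) {x : ℝ} (hx : x ∈ Icc a b) :
    (b - a) * e x =
      (x - a) * (∫ t in x..b, (t - b) * e'' t) - (b - x) * ∫ t in a..x, (t - a) * e'' t := by
  rw [integral_sub_mul_eq_of_hasDerivWithinAt hx.2 (Icc_subset_Icc hx.1 le_rfl) he he' he'',
    integral_sub_mul_eq_of_hasDerivWithinAt hx.1 (Icc_subset_Icc le_rfl hx.2) he he' he'', ha, hb]
  ring

lemma abs_le_integral_abs_of_eq_zero (hab : a < b)
    (he : ∀ t ∈ Icc a b, HasDerivWithinAt e (e' t) (Icc a b) t)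
    (he' : ∀ t ∈ Icc a b, HasDerivWithinAt e' (e'' t) (Icc a b) t)
    (he'' : ContinuousOn e'' (Icc a b)) (ha : e a = 0) (hb : e b = 0) {x : ℝ} (hx : x ∈ Icc a b) :
    |e x| ≤ (b - a) / 4 * ∫ t in a..b, |e'' t| := by
  obtain ⟨hax, hxb⟩ := hx
  have hint : ∀ {p q}, a ≤ p → p ≤ q → q ≤ b → IntervalIntegrable e'' volume p q :=
    fun hap hpq hqb => (he''.mono (Icc_subset_Icc hap hqb)).intervalIntegrable_of_Icc hpq
  have hleft : |∫ t in a..x, (t - a) * e'' t| ≤ (x - a) * ∫ t in a..x, |e'' t| :=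
    abs_integral_mul_le hax (hint le_rfl hax hxb) fun t ht => by
      rw [abs_of_nonneg (by linarith [ht.1])]; linarith [ht.2]
  have hright : |∫ t in x..b, (t - b) * e'' t| ≤ (b - x) * ∫ t in x..b, |e'' t| :=
    abs_integral_mul_le hxb (hint hax hxb le_rfl) fun t ht => by
      rw [abs_of_nonpos (by linarith [ht.2])]; linarith [ht.1]
  have hsplit : (∫ t in a..x, |e'' t|) + ∫ t in x..b, |e'' t| = ∫ t in a..b, |e'' t| :=
    integral_add_adjacent_intervals (hint le_rfl hax hxb).abs (hint hax hxb le_rfl).abs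
  have hM : 0 ≤ ∫ t in a..b, |e'' t| := integral_nonneg hab.le fun t _ => abs_nonneg _
  have hAMGM : (x - a) * (b - x) ≤ (b - a) ^ 2 / 4 := by nlinarith [sq_nonneg (a + b - 2 * x)]
  refine le_of_mul_le_mul_left ?_ (sub_pos.2 hab)
  calc (b - a) * |e x| = |(b - a) * e x| := by rw [abs_mul, abs_of_pos (sub_pos.2 hab)]
    _ = |(x - a) * (∫ t in x..b, (t - b) * e'' t) - (b - x) * ∫ t in a..x, (t - a) * e'' t| := by
        rw [sub_mul_eq_green_of_eq_zero he he' he'' ha hb ⟨hax, hxb⟩]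
    _ ≤ (x - a) * |∫ t in x..b, (t - b) * e'' t| + (b - x) * |∫ t in a..x, (t - a) * e'' t| := by
        refine (abs_sub _ _).trans_eq ?_
        rw [abs_mul, abs_mul, abs_of_nonneg (sub_nonneg.2 hax), abs_of_nonneg (sub_nonneg.2 hxb)]
    _ ≤ (x - a) * ((b - x) * ∫ t in x..b, |e'' t|) +
          (b - x) * ((x - a) * ∫ t in a..x, |e'' t|) := by gcongr
    _ = (x - a) * (b - x) * ∫ t in a..b, |e'' t| := by rw [← hsplit]; ring
    _ ≤ (b - a) ^ 2 / 4 * ∫ t in a..b, |e'' t| := by gcongr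
    _ = (b - a) * ((b - a) / 4 * ∫ t in a..b, |e'' t|) := by ring

lemma integral_sq_le_of_eq_zero (hab : a < b)
    (he : ∀ t ∈ Icc a b, HasDerivWithinAt e (e' t) (Icc a b) t)
    (he' : ∀ t ∈ Icc a b, HasDerivWithinAt e' (e'' t) (Icc a b) t)
    (he'' : ContinuousOn e'' (Icc a b)) (ha : e a = 0) (hb : e b = 0) :
    ∫ x in a..b, e x ^ 2 ≤ (b - a) ^ 4 / 16 * ∫ x in a..b, e'' x ^ 2 := by
  have hCS : (∫ t in a..b, |e'' t|) ^ 2 ≤ (b - a) * ∫ t in a..b, e'' t ^ 2 := by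
    simpa only [sq_abs] using sq_intervalIntegral_le_mul_integral_sq hab.le
      (he''.abs.intervalIntegrable_of_Icc hab.le)
      ((he''.abs.pow 2).intervalIntegrable_of_Icc hab.le)
  have hpointwise : ∀ x ∈ Icc a b, e x ^ 2 ≤ (b - a) ^ 3 / 16 * ∫ t in a..b, e'' t ^ 2 := by
    intro x hx
    calc e x ^ 2 = |e x| ^ 2 := (sq_abs _).symm
      _ ≤ ((b - a) / 4 * ∫ t in a..b, |e'' t|) ^ 2 := by
          gcongr; exact abs_le_integral_abs_of_eq_zero hab he he' he'' ha hb hx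
      _ = (b - a) ^ 2 / 16 * (∫ t in a..b, |e'' t|) ^ 2 := by ring
      _ ≤ (b - a) ^ 2 / 16 * ((b - a) * ∫ t in a..b, e'' t ^ 2) := by gcongr
      _ = (b - a) ^ 3 / 16 * ∫ t in a..b, e'' t ^ 2 := by ring
  have hec : ContinuousOn e (Icc a b) := fun t ht => (he t ht).continuousWithinAt
  calc ∫ x in a..b, e x ^ 2 ≤ ∫ _ in a..b, (b - a) ^ 3 / 16 * ∫ t in a..b, e'' t ^ 2 :=
        integral_mono_on hab.le ((hec.pow 2).intervalIntegrable_of_Icc hab.le)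
          intervalIntegrable_const hpointwise
    _ = (b - a) ^ 4 / 16 * ∫ x in a..b, e'' x ^ 2 := by
        rw [intervalIntegral.integral_const, smul_eq_mul]; ring

end Dirichlet

lemma integral_sq_sub_le_of_affine_interpolant {u u' u'' uI : ℝ → ℝ} {p q c d : ℝ} (hpq : p < q)
    (hu : ∀ t ∈ Icc p q, HasDerivWithinAt u (u' t) (Icc p q) t)
    (hu' : ∀ t ∈ Icc p q, HasDerivWithinAt u' (u'' t) (Icc p q) t)
    (hu'' : ContinuousOn u'' (Icc p q)) (haff : ∀ x ∈ Icc p q, uI x = c * x + d)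
    (hp : uI p = u p) (hq : uI q = u q) :
    ∫ x in p..q, (u x - uI x) ^ 2 ≤ (q - p) ^ 4 / 16 * ∫ x in p..q, u'' x ^ 2 := by
  have hcongr : EqOn (fun x => (u x - uI x) ^ 2) (fun x => (u x - (c * x + d)) ^ 2) (uIcc p q) :=
    fun x hx => by dsimp only; rw [haff x (uIcc_of_le hpq.le ▸ hx)]
  have he : ∀ t ∈ Icc p q,
      HasDerivWithinAt (fun x => u x - (c * x + d)) (u' t - c) (Icc p q) t := fun t ht =>
    ((hu t ht).sub (((hasDerivWithinAt_id t _).const_mul c).add_const d)).congr_deriv (by simp)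
  have he' : ∀ t ∈ Icc p q, HasDerivWithinAt (fun x => u' x - c) (u'' t) (Icc p q) t :=
    fun t ht => by simpa using (hu' t ht).sub_const c
  rw [integral_congr hcongr]
  refine integral_sq_le_of_eq_zero hpq he he' hu'' ?_ ?_
  · rw [← haff p (left_mem_Icc.2 hpq.le), hp, sub_self]
  · rw [← haff q (right_mem_Icc.2 hpq.le), hq, sub_self]

lemma integral_le_mul_integral_of_cells {f g : ℝ → ℝ} {x : ℕ → ℝ} {n : ℕ} {C : ℝ}
    (hf : ∀ k < n, IntervalIntegrable f volume (x k) (x (k + 1)))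
    (hg : ∀ k < n, IntervalIntegrable g volume (x k) (x (k + 1)))
    (hfg : ∀ k < n, ∫ t in x k..x (k + 1), f t ≤ C * ∫ t in x k..x (k + 1), g t) :
    ∫ t in x 0..x n, f t ≤ C * ∫ t in x 0..x n, g t := by
  rw [← sum_integral_adjacent_intervals hf, ← sum_integral_adjacent_intervals hg, Finset.mul_sum]
  exact Finset.sum_le_sum fun k hk => hfg k (Finset.mem_range.1 hk)

/-- If `u` is twice continuously differentiable on `[0,1]` and `u_I` is its
piecewise linear interpolant on the uniform mesh `x_i = i·h`, `h = 1/n`, then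
`‖u − u_I‖_{L²(0,1)} ≤ (h²/π) ‖u''‖_{L²(0,1)}`. -/
theorem statement17 (n : ℕ) (hn : 1 ≤ n) (h : ℝ) (hh : h = 1 / n)
    (u u' u'' : ℝ → ℝ)
    (hu : ∀ x ∈ Set.Icc (0 : ℝ) 1, HasDerivWithinAt u (u' x) (Set.Icc 0 1) x)
    (hu' : ∀ x ∈ Set.Icc (0 : ℝ) 1, HasDerivWithinAt u' (u'' x) (Set.Icc 0 1) x)
    (hu''c : ContinuousOn u'' (Set.Icc 0 1))
    (uI : ℝ → ℝ)
    (hnode : ∀ i : ℕ, i ≤ n → uI ((i : ℝ) * h) = u ((i : ℝ) * h))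
    (haff : ∀ i : ℕ, 1 ≤ i → i ≤ n → ∃ c d : ℝ,
      ∀ x ∈ Set.Icc (((i : ℝ) - 1) * h) ((i : ℝ) * h), uI x = c * x + d) :
    Real.sqrt (∫ x in (0 : ℝ)..1, (u x - uI x) ^ 2) ≤
      h ^ 2 / Real.pi * Real.sqrt (∫ x in (0 : ℝ)..1, (u'' x) ^ 2) := by
  have hh0 : 0 < h := by rw [hh]; exact one_div_pos.2 (Nat.cast_pos.2 hn)
  set x : ℕ → ℝ := fun i => (i : ℝ) * h with hx
  have hx0 : x 0 = 0 := by simp [hx]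
  have hxn : x n = 1 := by simp only [hx, hh]; field_simp
  have hlen : ∀ k, x (k + 1) - x k = h := fun k => by simp only [hx]; push_cast; ring
  have hlt : ∀ k, x k < x (k + 1) := fun k => by linarith [hlen k]
  have hsub : ∀ k < n, Icc (x k) (x (k + 1)) ⊆ Icc 0 1 := fun k hk => by
    refine Icc_subset_Icc (by positivity) ?_
    rw [← hxn]; simp only [hx]; gcongr; exact_mod_cast hk
  have hcell : ∀ k < n, ∃ c d : ℝ, ∀ y ∈ Icc (x k) (x (k + 1)), uI y = c * y + d := fun k hk => by
    simpa [hx] using haff (k + 1) (by omega) (by omega)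
  have huc : ContinuousOn u (Icc 0 1) := fun t ht => (hu t ht).continuousWithinAt
  have hL2 : ∫ y in (0 : ℝ)..1, (u y - uI y) ^ 2 ≤ h ^ 4 / 16 * ∫ y in (0 : ℝ)..1, u'' y ^ 2 := by
    rw [← hx0, ← hxn]
    refine integral_le_mul_integral_of_cells (fun k hk => ?_) (fun k hk => ?_) (fun k hk => ?_)
    · obtain ⟨c, d, hcd⟩ := hcell k hk
      have huIc : ContinuousOn uI (Icc (x k) (x (k + 1))) :=
        ContinuousOn.congr (by fun_prop) hcd
      exact (((huc.mono (hsub k hk)).sub huIc).pow 2).intervalIntegrable_of_Icc (hlt k).le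
    · exact ((hu''c.mono (hsub k hk)).pow 2).intervalIntegrable_of_Icc (hlt k).le
    · obtain ⟨c, d, hcd⟩ := hcell k hk
      rw [← hlen k]
      exact integral_sq_sub_le_of_affine_interpolant (hlt k)
        (fun t ht => (hu t (hsub k hk ht)).mono (hsub k hk))
        (fun t ht => (hu' t (hsub k hk ht)).mono (hsub k hk)) (hu''c.mono (hsub k hk)) hcd
        (hnode k (by omega)) (hnode (k + 1) hk)
  calc √(∫ y in (0 : ℝ)..1, (u y - uI y) ^ 2)
      ≤ √(h ^ 4 / 16 * ∫ y in (0 : ℝ)..1, u'' y ^ 2) := Real.sqrt_le_sqrt hL2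
    _ = h ^ 2 / 4 * √(∫ y in (0 : ℝ)..1, u'' y ^ 2) := by
        rw [Real.sqrt_mul (by positivity), show h ^ 4 / 16 = (h ^ 2 / 4) ^ 2 by ring,
          Real.sqrt_sq (by positivity)]
    _ ≤ h ^ 2 / Real.pi * √(∫ y in (0 : ℝ)..1, u'' y ^ 2) := by
        gcongr; exact Real.pi_le_four
end

section
/- Let ε > 0, let f : [0,1] → ℝ be continuous with ∫₀¹ f(s) ds = 0, and let u be continuously differentiable on [0,1], satisfying −ε u''(x) + u'(x) = f(x) on (0,1) and u(0) = u(1) = 0. Let n ≥ 1, h = 1/n, and let u_I be the piecewise linear interpolant of u on the uniform mesh x_i = i·h. Then (∫₀¹ (u(x) − u_I(x))² dx)^{1/2} ≤ (h/√2) ‖f‖_∞, where ‖f‖_∞ = sup_{s∈[0,1]} |f(s)|; in particular the bound is independent of ε. -/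
/-!
The derivative is bounded uniformly in `ε`: integrating the equation over `[0,1]` gives
`u'(0) = u'(1)`, and for `M = ‖f‖_∞` the function `e^{-x/ε} (u'(x) - M)` is nondecreasing
(its derivative is `e^{-x/ε} (M - f(x)) / ε`), which together with `u'(0) = u'(1)` forces
`u' ≤ M`; applied to `-u'` this gives `|u'| ≤ M`. So `u` is `M`-Lipschitz, and on a cell
`[a, b]` the error `u - u_I` equals `((b - x)(u x - u a) - (x - a)(u b - u x)) / (b - a)`, of size
at most `2 M (x - a)(b - x) / h ≤ M h / 2`. Hence the `L²` error is at most `M h / 2 ≤ M h / √2`.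
-/
open Set

theorem le_of_neg_mul_deriv_add_le {ε M a b : ℝ} {v v' : ℝ → ℝ} (hε : 0 < ε) (hab : a < b)
    (hv : ContinuousOn v (Icc a b)) (hv' : ∀ x ∈ Ioo a b, HasDerivAt v (v' x) x)
    (hL : ∀ x ∈ Ioo a b, -ε * v' x + v x ≤ M) (hba : v b ≤ v a) :
    ∀ x ∈ Icc a b, v x ≤ M := by
  set g : ℝ → ℝ := fun x => Real.exp (-x / ε) * (v x - M)
  have hg_mono : MonotoneOn g (Icc a b) := by
    refine monotoneOn_of_hasDerivWithinAt_nonneg (convex_Icc a b)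
      ((Real.continuous_exp.comp (continuous_neg.div_const ε)).continuousOn.mul
        (hv.sub continuousOn_const)) (f' := fun x => Real.exp (-x / ε) / ε * (ε * v' x - v x + M))
      (fun x hx => ?_) (fun x hx => ?_) <;> rw [interior_Icc] at hx
    · have hexp : HasDerivAt (fun y => Real.exp (-y / ε)) (Real.exp (-x / ε) * (-1 / ε)) x := by
        simpa using ((hasDerivAt_neg x).div_const ε).exp
      refine ((hexp.mul ((hv' x hx).sub_const M)).congr_deriv ?_).hasDerivWithinAt
      field_simp
      ring
    · exact mul_nonneg (div_nonneg (Real.exp_pos _).le hε.le) (by linarith [hL x hx])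
  -- The weight `exp (-x/ε)` is strictly decreasing, so `g a ≤ g b` and `v b ≤ v a` force `v b ≤ M`.
  have hvb : v b ≤ M := by
    by_contra! hMb
    have hgab : g a ≤ g b := hg_mono (left_mem_Icc.2 hab.le) (right_mem_Icc.2 hab.le) hab.le
    have hexp : Real.exp (-b / ε) < Real.exp (-a / ε) :=
      Real.exp_lt_exp.2 (div_lt_div_of_pos_right (neg_lt_neg hab) hε)
    nlinarith [Real.exp_pos (-a / ε)]
  intro x hx
  have hgxb : g x ≤ g b := hg_mono hx (right_mem_Icc.2 hab.le) hx.2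
  have hgb : g b ≤ 0 := mul_nonpos_of_nonneg_of_nonpos (Real.exp_pos _).le (by linarith)
  have := (mul_nonpos_iff_pos_imp_nonpos.1 (hgxb.trans hgb)).1 (Real.exp_pos _)
  linarith

theorem neg_mul_deriv_add_eq_add_integral {ε a b : ℝ} {f u u' u'' : ℝ → ℝ} (hab : a ≤ b)
    (hf : ContinuousOn f (Icc a b)) (hu : ContinuousOn u (Icc a b))
    (hu' : ∀ x ∈ Ioo a b, HasDerivAt u (u' x) x) (hu'c : ContinuousOn u' (Icc a b))
    (hu'' : ∀ x ∈ Ioo a b, HasDerivAt u' (u'' x) x)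
    (hode : ∀ x ∈ Ioo a b, -ε * u'' x + u' x = f x) :
    -ε * u' b + u b = -ε * u' a + u a + ∫ x in a..b, f x := by
  have hflux : ∀ x ∈ Ioo a b, HasDerivAt (fun y => -ε * u' y + u y) (f x) x := fun x hx =>
    (((hu'' x hx).const_mul (-ε)).add (hu' x hx)).congr_deriv (hode x hx)
  rw [intervalIntegral.integral_eq_sub_of_hasDerivAt_of_le hab
    (by fun_prop) hflux (hf.intervalIntegrable_of_Icc hab)]
  ring

theorem abs_deriv_le_of_convectionDiffusion {ε a b M : ℝ} {f u u' u'' : ℝ → ℝ} (hε : 0 < ε)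
    (hab : a < b) (hf : ContinuousOn f (Icc a b)) (hf0 : ∫ s in a..b, f s = 0)
    (hu' : ∀ x ∈ Icc a b, HasDerivWithinAt u (u' x) (Icc a b) x)
    (hu'c : ContinuousOn u' (Icc a b)) (hu'' : ∀ x ∈ Ioo a b, HasDerivAt u' (u'' x) x)
    (hode : ∀ x ∈ Ioo a b, -ε * u'' x + u' x = f x) (huab : u a = u b)
    (hM : ∀ x ∈ Ioo a b, |f x| ≤ M) :
    ∀ x ∈ Icc a b, |u' x| ≤ M := by
  have hu'_at : ∀ x ∈ Ioo a b, HasDerivAt u (u' x) x := fun x hx =>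
    (hu' x (Ioo_subset_Icc_self hx)).hasDerivAt (Icc_mem_nhds hx.1 hx.2)
  have hflux := neg_mul_deriv_add_eq_add_integral hab.le hf
    (fun x hx => (hu' x hx).continuousWithinAt) hu'_at hu'c hu'' hode
  have hu'ab : u' a = u' b := by
    rw [hf0, add_zero, huab] at hflux
    exact (mul_left_cancel₀ (neg_ne_zero.2 hε.ne') (add_right_cancel hflux)).symm
  intro x hx
  refine abs_le.2 ⟨?_, ?_⟩
  · have := le_of_neg_mul_deriv_add_le (M := M) (v := fun y => -u' y) (v' := fun y => -u'' y)
      hε hab hu'c.neg (fun y hy => (hu'' y hy).neg)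
      (fun y hy => by linarith [hode y hy, neg_abs_le (f y), hM y hy])
      (neg_le_neg hu'ab.le) x hx
    linarith
  · exact le_of_neg_mul_deriv_add_le hε hab hu'c hu''
      (fun y hy => (hode y hy).trans_le ((le_abs_self _).trans (hM y hy))) hu'ab.ge x hx

theorem abs_sub_affine_le_of_lipschitz {u : ℝ → ℝ} {a b c d M : ℝ} (hab : a < b)
    (hlip : ∀ x ∈ Icc a b, ∀ y ∈ Icc a b, |u y - u x| ≤ M * |y - x|)
    (ha : c * a + d = u a) (hb : c * b + d = u b) {x : ℝ} (hx : x ∈ Icc a b) :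
    |u x - (c * x + d)| ≤ M * (b - a) / 2 := by
  have hxa := hlip a (left_mem_Icc.2 hab.le) x hx
  have hbx := hlip x hx b (right_mem_Icc.2 hab.le)
  rw [abs_of_nonneg (sub_nonneg.2 hx.1)] at hxa
  rw [abs_of_nonneg (sub_nonneg.2 hx.2)] at hbx
  have hM : 0 ≤ M := by
    have := hlip a (left_mem_Icc.2 hab.le) b (right_mem_Icc.2 hab.le)
    rw [abs_of_pos (sub_pos.2 hab)] at this
    exact nonneg_of_mul_nonneg_left ((abs_nonneg _).trans this) (sub_pos.2 hab)
  have hsplit : (b - a) * (u x - (c * x + d)) = (b - x) * (u x - u a) - (x - a) * (u b - u x) := by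
    linear_combination -(b - x) * ha - (x - a) * hb
  have key : (b - a) * |u x - (c * x + d)| ≤ (b - a) * (M * (b - a) / 2) := by
    calc (b - a) * |u x - (c * x + d)|
        = |(b - x) * (u x - u a) - (x - a) * (u b - u x)| := by
          rw [← hsplit, abs_mul, abs_of_pos (sub_pos.2 hab)]
      _ ≤ |(b - x) * (u x - u a)| + |(x - a) * (u b - u x)| := abs_sub _ _
      _ = (b - x) * |u x - u a| + (x - a) * |u b - u x| := by
          rw [abs_mul, abs_mul, abs_of_nonneg (sub_nonneg.2 hx.2),
            abs_of_nonneg (sub_nonneg.2 hx.1)]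
      _ ≤ (b - x) * (M * (x - a)) + (x - a) * (M * (b - x)) := by
          gcongr
          · linarith [hx.2]
          · linarith [hx.1]
      _ ≤ (b - a) * (M * (b - a) / 2) := by nlinarith [sq_nonneg (2 * x - a - b)]
  exact le_of_mul_le_mul_left key (sub_pos.2 hab)

theorem exists_mem_Icc_cell {h x : ℝ} {n : ℕ} (hn : 1 ≤ n) (hx : x ∈ Icc 0 (n * h)) :
    ∃ i < n, x ∈ Icc (i * h) ((i + 1) * h) := by
  induction n, hn using Nat.le_induction with
  | base => exact ⟨0, one_pos, by simpa using hx⟩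
  | succ n _ ih =>
    by_cases hxn : x ≤ n * h
    · obtain ⟨i, hi, hxi⟩ := ih ⟨hx.1, hxn⟩
      exact ⟨i, hi.trans n.lt_succ_self, hxi⟩
    · exact ⟨n, n.lt_succ_self, (not_le.1 hxn).le, by simpa using hx.2⟩

theorem Icc_cell_subset {h : ℝ} {i n : ℕ} (hh : 0 ≤ h) (hi : i < n) :
    Icc (i * h) ((i + 1) * h) ⊆ Icc 0 (n * h) := by
  have : (i : ℝ) + 1 ≤ n := by exact_mod_cast hi
  exact Icc_subset_Icc (by positivity) (by nlinarith)

theorem abs_sub_interpolant_le {u uI : ℝ → ℝ} {n : ℕ} {h M : ℝ} (hn : 1 ≤ n) (hh : 0 < h)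
    (hnode : ∀ i ≤ n, uI (i * h) = u (i * h))
    (haff : ∀ i < n, ∃ c d : ℝ, ∀ x ∈ Icc (i * h) ((i + 1) * h), uI x = c * x + d)
    (hlip : ∀ x ∈ Icc 0 (n * h), ∀ y ∈ Icc 0 (n * h), |u y - u x| ≤ M * |y - x|)
    {x : ℝ} (hx : x ∈ Icc 0 (n * h)) :
    |u x - uI x| ≤ M * h / 2 := by
  obtain ⟨i, hi, hxi⟩ := exists_mem_Icc_cell hn hx
  obtain ⟨c, d, hcd⟩ := haff i hi
  have hcell := Icc_cell_subset hh.le hi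
  have hleft : c * (i * h) + d = u (i * h) := by
    rw [← hcd _ (left_mem_Icc.2 (by nlinarith)), hnode i hi.le]
  have hright : c * ((i + 1) * h) + d = u ((i + 1) * h) := by
    rw [← hcd _ (right_mem_Icc.2 (by nlinarith))]
    exact_mod_cast hnode (i + 1) hi
  have := abs_sub_affine_le_of_lipschitz (by nlinarith)
    (fun x hx y hy => hlip x (hcell hx) y (hcell hy)) hleft hright hxi
  rw [hcd x hxi]
  linarith

theorem intervalIntegrable_sq_sub_interpolant {u uI : ℝ → ℝ} {n : ℕ} {h : ℝ} (hh : 0 ≤ h)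
    (haff : ∀ i < n, ∃ c d : ℝ, ∀ x ∈ Icc (i * h) ((i + 1) * h), uI x = c * x + d)
    (hu : ContinuousOn u (Icc 0 (n * h))) :
    IntervalIntegrable (fun x => (u x - uI x) ^ 2) MeasureTheory.volume 0 (n * h) := by
  have hcells := IntervalIntegrable.trans_iterate (a := fun i : ℕ => i * h) (n := n)
    (f := fun x => (u x - uI x) ^ 2) (μ := MeasureTheory.volume) fun i hi => by
      obtain ⟨c, d, hcd⟩ := haff i hi
      have hcont : ContinuousOn (fun x => (u x - (c * x + d)) ^ 2) (Icc (i * h) ((i + 1) * h)) :=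
        ((hu.mono (Icc_cell_subset hh hi)).sub (by fun_prop)).pow 2
      push_cast
      exact (hcont.congr fun x hx => by rw [hcd x hx]).intervalIntegrable_of_Icc (by nlinarith)
  simpa using hcells

theorem abs_le_iSup_abs_of_continuousOn_s18 {f : ℝ → ℝ} {a b : ℝ} (hf : ContinuousOn f (Icc a b))
    {x : ℝ} (hx : x ∈ Icc a b) : |f x| ≤ ⨆ s : Icc a b, |f s| := by
  have hbdd := isCompact_Icc.bddAbove_image hf.abs
  rw [image_eq_range] at hbdd
  exact le_ciSup hbdd ⟨x, hx⟩

/-- Let `f` be continuous on `[0,1]` with zero average and let `u` be a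
continuously differentiable solution on `[0,1]` of `−ε u'' + u' = f` on `(0,1)` with
`u(0) = u(1) = 0`. If `u_I` is the piecewise linear interpolant of `u` on the uniform
mesh `x_i = i·h`, `h = 1/n`, then `‖u − u_I‖_{L²(0,1)} ≤ (h/√2) ‖f‖_∞`, a bound
independent of `ε`. -/
theorem statement18 (ε : ℝ) (hε : 0 < ε) (f : ℝ → ℝ)
    (hf : ContinuousOn f (Set.Icc 0 1))
    (hf0 : (∫ s in (0 : ℝ)..1, f s) = 0)
    (u u' u'' : ℝ → ℝ)
    (hu' : ∀ x ∈ Set.Icc (0 : ℝ) 1, HasDerivWithinAt u (u' x) (Set.Icc 0 1) x)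
    (hu'c : ContinuousOn u' (Set.Icc 0 1))
    (hu'' : ∀ x ∈ Set.Ioo (0 : ℝ) 1, HasDerivAt u' (u'' x) x)
    (hode : ∀ x ∈ Set.Ioo (0 : ℝ) 1, -ε * u'' x + u' x = f x)
    (hu0 : u 0 = 0) (hu1 : u 1 = 0)
    (n : ℕ) (hn : 1 ≤ n) (h : ℝ) (hh : h = 1 / n)
    (uI : ℝ → ℝ)
    (hnode : ∀ i : ℕ, i ≤ n → uI ((i : ℝ) * h) = u ((i : ℝ) * h))
    (haff : ∀ i : ℕ, 1 ≤ i → i ≤ n → ∃ c d : ℝ,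
      ∀ x ∈ Set.Icc (((i : ℝ) - 1) * h) ((i : ℝ) * h), uI x = c * x + d) :
    Real.sqrt (∫ x in (0 : ℝ)..1, (u x - uI x) ^ 2) ≤
      h / Real.sqrt 2 * ⨆ s : Set.Icc (0 : ℝ) 1, |f (s : ℝ)| := by
  set M := ⨆ s : Icc (0 : ℝ) 1, |f s|
  have hh0 : 0 < h := by rw [hh]; exact one_div_pos.2 (by exact_mod_cast hn)
  have hnh : (n : ℝ) * h = 1 := by rw [hh]; field_simp
  have hM : 0 ≤ M :=
    (abs_nonneg _).trans (abs_le_iSup_abs_of_continuousOn_s18 hf (left_mem_Icc.2 zero_le_one))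
  have hu'M := abs_deriv_le_of_convectionDiffusion hε one_pos hf hf0 hu' hu'c hu'' hode
    (hu0.trans hu1.symm) fun x hx => abs_le_iSup_abs_of_continuousOn_s18 hf (Ioo_subset_Icc_self hx)
  have hlip : ∀ x ∈ Icc (0 : ℝ) (n * h), ∀ y ∈ Icc (0 : ℝ) (n * h),
      |u y - u x| ≤ M * |y - x| := by
    rw [hnh]
    exact fun x hx y hy =>
      (convex_Icc 0 1).norm_image_sub_le_of_norm_hasDerivWithin_le hu' hu'M hx hy
  have hcells : ∀ i < n, ∃ c d : ℝ, ∀ x ∈ Icc (i * h) ((i + 1) * h), uI x = c * x + d := by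
    intro i hi
    simpa using haff (i + 1) (Nat.le_add_left 1 i) hi
  have herr : ∀ x ∈ Icc (0 : ℝ) 1, (u x - uI x) ^ 2 ≤ (M * h / 2) ^ 2 := by
    rw [← hnh]
    exact fun x hx =>
      sq_le_sq.2 ((abs_sub_interpolant_le hn hh0 hnode hcells hlip hx).trans (le_abs_self _))
  have hint := intervalIntegrable_sq_sub_interpolant hh0.le hcells
    (hnh ▸ fun x hx => (hu' x hx).continuousWithinAt)
  rw [hnh] at hint
  have hL2 : ∫ x in (0 : ℝ)..1, (u x - uI x) ^ 2 ≤ (M * h / 2) ^ 2 := by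
    simpa using intervalIntegral.integral_mono_on zero_le_one hint intervalIntegrable_const herr
  calc Real.sqrt (∫ x in (0 : ℝ)..1, (u x - uI x) ^ 2)
      ≤ M * h / 2 := Real.sqrt_le_iff.2 ⟨by positivity, hL2⟩
    _ ≤ h / Real.sqrt 2 * M := by
      rw [div_mul_eq_mul_div, mul_comm h M]
      gcongr
      exact Real.sqrt_le_iff.2 ⟨zero_le_two, by norm_num⟩
end
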